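/- arXiv:1406.3224 — 5 statements merged into one kernel-verified Lean document; each statement's English description precedes it below -/
import Mathlib

section
/- Suppose G is globally K-bounded. If there exists a dissipative finite-step ISS Lyapunov function for the system x(k+1) = G(x(k),u(k)), then the system is input-to-state stable (ISS). -/
open scoped NNReal

/-- A function `α : ℝ≥0 → ℝ≥0` is of class K if it is continuous, strictly
increasing and vanishes at 0. -/
def ClassK (α : ℝ≥0 → ℝ≥0) : Prop :=
  Continuous α ∧ StrictMono α ∧ α 0 = 0

/-- Class K∞: class K and unbounded. -/
def ClassKInf (α : ℝ≥0 → ℝ≥0) : Prop :=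
  ClassK α ∧ Filter.Tendsto α Filter.atTop Filter.atTop

/-- Class KL functions. -/
def ClassKL (β : ℝ≥0 → ℝ≥0 → ℝ≥0) : Prop :=
  (∀ t, ClassK fun s => β s t) ∧
  ∀ s, 0 < s → Continuous (β s) ∧ StrictAnti (β s) ∧
    Filter.Tendsto (β s) Filter.atTop (nhds 0)

/-- Positive definite function on [0,∞). -/
def PosDefFun (ρ : ℝ≥0 → ℝ≥0) : Prop :=
  Continuous ρ ∧ ρ 0 = 0 ∧ ∀ s, 0 < s → 0 < ρ s

variable {E F : Type*} [NormedAddCommGroup E] [NormedAddCommGroup F]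

/-- Solution map of the discrete-time system x(k+1) = G(x(k),u(k)). -/
def sol (G : E → F → E) (ξ : E) (u : ℕ → F) : ℕ → E
  | 0 => ξ
  | k + 1 => G (sol G ξ u k) (u k)

/-- A bounded input. -/
def BddInput (u : ℕ → F) : Prop := BddAbove (Set.range fun k => ‖u k‖₊)

/-- The sup-norm ‖u‖∞ of an input. -/
noncomputable def supNorm (u : ℕ → F) : ℝ≥0 := ⨆ k, ‖u k‖₊

/-- Global K-boundedness of the dynamics. -/
def GloballyKBounded (G : E → F → E) : Prop :=
  ∃ ω₁ ω₂ : ℝ≥0 → ℝ≥0, ClassK ω₁ ∧ ClassK ω₂ ∧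
    ∀ ξ μ, ‖G ξ μ‖₊ ≤ ω₁ ‖ξ‖₊ + ω₂ ‖μ‖₊

/-- Proper and positive definite function. -/
def ProperPosDef (V : E → ℝ≥0) : Prop :=
  ∃ α₁ α₂ : ℝ≥0 → ℝ≥0, ClassKInf α₁ ∧ ClassKInf α₂ ∧
    ∀ ξ, α₁ ‖ξ‖₊ ≤ V ξ ∧ V ξ ≤ α₂ ‖ξ‖₊

/-- Dissipative finite-step ISS Lyapunov function with a prescribed step M. -/
def DissFinStepLyapAt (G : E → F → E) (V : E → ℝ≥0) (M : ℕ) : Prop :=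
  ProperPosDef V ∧ 1 ≤ M ∧
  ∃ σ ρ : ℝ≥0 → ℝ≥0, ClassK σ ∧ PosDefFun ρ ∧ ClassKInf (fun s => s - ρ s) ∧
    ∀ ξ u, BddInput u → V (sol G ξ u M) ≤ ρ (V ξ) + σ (supNorm u)

/-- Dissipative finite-step ISS Lyapunov function. -/
def DissFinStepLyap (G : E → F → E) (V : E → ℝ≥0) : Prop :=
  ∃ M, DissFinStepLyapAt G V M

/-- Input-to-state stability. -/
def ISS (G : E → F → E) : Prop :=
  ∃ β γ, ClassKL β ∧ ClassK γ ∧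
    ∀ ξ u, BddInput u → ∀ k : ℕ, ‖sol G ξ u k‖₊ ≤ β ‖ξ‖₊ k + γ (supNorm u)

/-- Exponential input-to-state stability. -/
def ExpISS (G : E → F → E) : Prop :=
  ∃ (C κ : ℝ≥0) (γ : ℝ≥0 → ℝ≥0), 1 ≤ C ∧ κ < 1 ∧ ClassK γ ∧
    ∀ ξ u, BddInput u → ∀ k : ℕ, ‖sol G ξ u k‖₊ ≤ C * κ ^ k * ‖ξ‖₊ + γ (supNorm u)


open Filter Set
open scoped Topology

set_option linter.unusedSectionVars false
set_option linter.unusedVariables false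
set_option maxHeartbeats 1000000

namespace FSL

/-- weak class-K functions: continuous, monotone, zero at zero -/
def K0 (f : ℝ≥0 → ℝ≥0) : Prop := Continuous f ∧ Monotone f ∧ f 0 = 0

lemma classK_k0 {f : ℝ≥0 → ℝ≥0} (h : ClassK f) : K0 f := ⟨h.1, h.2.1.monotone, h.2.2⟩

lemma K0.id : K0 (fun s => s) := ⟨continuous_id, monotone_id, rfl⟩

lemma K0.zero : K0 (fun _ => 0) := ⟨continuous_const, monotone_const, rfl⟩

lemma K0.add {f g : ℝ≥0 → ℝ≥0} (hf : K0 f) (hg : K0 g) : K0 (fun s => f s + g s) :=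
  ⟨hf.1.add hg.1, fun _ _ h => add_le_add (hf.2.1 h) (hg.2.1 h), by simp [hf.2.2, hg.2.2]⟩

lemma K0.max {f g : ℝ≥0 → ℝ≥0} (hf : K0 f) (hg : K0 g) : K0 (fun s => max (f s) (g s)) :=
  ⟨hf.1.max hg.1, fun _ _ h => max_le_max (hf.2.1 h) (hg.2.1 h), by simp [hf.2.2, hg.2.2]⟩

lemma K0.comp {f g : ℝ≥0 → ℝ≥0} (hf : K0 f) (hg : K0 g) : K0 (fun s => f (g s)) :=
  ⟨hf.1.comp hg.1, fun _ _ h => hf.2.1 (hg.2.1 h), by simp [hg.2.2, hf.2.2]⟩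

lemma K0.two_mul {f : ℝ≥0 → ℝ≥0} (hf : K0 f) : K0 (fun s => f (2 * s)) :=
  ⟨hf.1.comp (continuous_const.mul continuous_id),
   fun _ _ h => hf.2.1 (by gcongr), by simpa using hf.2.2⟩

lemma K0.subadd {f : ℝ≥0 → ℝ≥0} (hf : K0 f) (a b : ℝ≥0) :
    f (a + b) ≤ f (2 * a) + f (2 * b) := by
  rcases le_total a b with h | h
  · calc f (a + b) ≤ f (2 * b) := hf.2.1 (by rw [_root_.two_mul]; exact add_le_add_left h _)
    _ ≤ f (2 * a) + f (2 * b) := le_add_self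
  · calc f (a + b) ≤ f (2 * a) := hf.2.1 (by rw [_root_.two_mul]; exact add_le_add_right h _)
    _ ≤ f (2 * a) + f (2 * b) := le_self_add

/-- Inverse of a class-K∞ function. -/
lemma exists_kinf_inv {α : ℝ≥0 → ℝ≥0} (h : ClassKInf α) :
    ∃ g : ℝ≥0 → ℝ≥0, Continuous g ∧ Monotone g ∧ g 0 = 0 ∧
      (∀ x, g (α x) = x) ∧ (∀ y, α (g y) = y) := by
  have hsurj : Function.Surjective α := by
    refine h.1.1.surjective h.2 ?_
    rw [OrderBot.atBot_eq ℝ≥0]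
    have hb : α ⊥ = ⊥ := h.1.2.2
    have h3 : Filter.Tendsto α (pure ⊥) (pure (α ⊥)) := Filter.tendsto_pure_pure α ⊥
    rwa [hb] at h3
  let e : ℝ≥0 ≃o ℝ≥0 := StrictMono.orderIsoOfSurjective α h.1.2.1 hsurj
  refine ⟨e.symm, e.symm.continuous, e.symm.monotone, ?_, fun x => e.symm_apply_apply x,
    fun y => e.apply_symm_apply y⟩
  have h2 := e.symm_apply_apply 0
  rwa [show e 0 = 0 from h.1.2.2] at h2




variable {f : ℝ≥0 → ℝ≥0} {s : ℝ≥0}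

noncomputable def rsup (f : ℝ≥0 → ℝ≥0) (s : ℝ≥0) : ℝ≥0 := sSup (f '' Icc 0 s)

lemma img_ne (f : ℝ≥0 → ℝ≥0) (s : ℝ≥0) : (f '' Icc 0 s).Nonempty :=
  ⟨f 0, mem_image_of_mem f ⟨le_rfl, zero_le (a := s)⟩⟩

lemma img_bdd (hf : Continuous f) (s : ℝ≥0) : BddAbove (f '' Icc 0 s) :=
  (isCompact_Icc.image hf).bddAbove

lemma le_rsup (hf : Continuous f) {t : ℝ≥0} (ht : t ≤ s) : f t ≤ rsup f s :=
  le_csSup (img_bdd hf s) (mem_image_of_mem f ⟨zero_le (a := t), ht⟩)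

lemma rsup_mono (hf : Continuous f) : Monotone (rsup f) := fun a b h =>
  csSup_le_csSup (img_bdd hf b) (img_ne f a) (image_mono (Icc_subset_Icc_right h))

lemma rsup_le {c : ℝ≥0} (h : ∀ t ≤ s, f t ≤ c) : rsup f s ≤ c := by
  refine csSup_le (img_ne f s) ?_
  rintro y ⟨t, ht, rfl⟩
  exact h t ht.2

lemma rsup_le_self (h : ∀ t, f t ≤ t) : rsup f s ≤ s :=
  rsup_le fun t ht => le_trans (h t) ht

lemma rsup_zero (h0 : f 0 = 0) : rsup f 0 = 0 := by
  have : f '' Icc 0 (0:ℝ≥0) = {0} := by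
    rw [Icc_self, image_singleton, h0]
  rw [rsup, this, csSup_singleton]

lemma rsup_lt_self (hf : Continuous f) (h0 : f 0 = 0) (h : ∀ t, 0 < t → f t < t)
    (hs : 0 < s) : rsup f s < s := by
  obtain ⟨t, ht, heq⟩ := isCompact_Icc.exists_sSup_image_eq (⟨0, le_rfl, zero_le (a := s)⟩)
    hf.continuousOn
  rw [rsup, heq]
  rcases eq_or_lt_of_le (zero_le (a := t)) with h0t | h0t
  · rw [← h0t, h0]; exact hs
  · exact lt_of_lt_of_le (h t h0t) ht.2

lemma rsup_continuous (hf : Continuous f) : Continuous (rsup f) := by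
  rw [Metric.continuous_iff]
  intro s₀ ε hε
  have hK : IsCompact (Icc (0:ℝ≥0) (s₀ + 1)) := isCompact_Icc
  have huc := hK.uniformContinuousOn_of_continuous hf.continuousOn
  rw [Metric.uniformContinuousOn_iff] at huc
  obtain ⟨δ, hδpos, hδ⟩ := huc (ε/2) (half_pos hε)
  -- key step lemma
  have step : ∀ a b : ℝ≥0, a ≤ b → b ≤ s₀ + 1 → dist b a < δ →
      rsup f b ≤ rsup f a + (ε/2).toNNReal := by
    intro a b hab hb1 hd
    refine rsup_le fun t ht => ?_
    rcases le_total t a with hta | hta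
    · exact le_trans (le_rsup hf hta) le_self_add
    · have htK : t ∈ Icc (0:ℝ≥0) (s₀+1) := ⟨zero_le (a := t), le_trans ht hb1⟩
      have haK : a ∈ Icc (0:ℝ≥0) (s₀+1) := ⟨zero_le (a := a), le_trans (le_trans hab hb1) le_rfl⟩
      have hdta : dist t a < δ := by
        rw [NNReal.dist_eq] at hd ⊢
        have h1 : (a:ℝ) ≤ t := hta
        have h2 : (t:ℝ) ≤ b := ht
        have h3 : (a:ℝ) ≤ b := hab
        rw [abs_of_nonneg (by linarith)] at hd ⊢
        linarith
      have := hδ t htK a haK hdta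
      rw [NNReal.dist_eq] at this
      have h4 : (f t : ℝ) ≤ f a + ε/2 := by
        rcases abs_lt.1 this with ⟨hl, hr⟩; linarith
      have h5 : f t ≤ f a + (ε/2).toNNReal := by
        rw [← NNReal.coe_le_coe]
        push_cast
        rw [Real.coe_toNNReal _ (le_of_lt (half_pos hε))]
        exact h4
      exact le_trans h5 (by gcongr; exact le_rsup hf le_rfl)
  set δ' := min δ 1 with hδ'
  have hδ'pos : 0 < δ' := lt_min hδpos one_pos
  refine ⟨δ', hδ'pos, fun s hd => ?_⟩
  have hmain : ∀ x y : ℝ≥0, x ≤ y → y ≤ x + (ε/2).toNNReal → dist x y < ε := by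
    intro x y hxy hyx
    rw [NNReal.dist_eq, abs_of_nonpos (sub_nonpos.2 (NNReal.coe_le_coe.2 hxy))]
    have : (y:ℝ) ≤ x + ε/2 := by
      calc (y:ℝ) ≤ ((x + (ε/2).toNNReal : ℝ≥0) : ℝ) := by exact_mod_cast hyx
      _ = x + ε/2 := by push_cast; rw [Real.coe_toNNReal _ (le_of_lt (half_pos hε))]
    linarith
  rcases le_total s s₀ with hss | hss
  · have h1 : rsup f s₀ ≤ rsup f s + (ε/2).toNNReal := by
      refine step s s₀ hss (le_add_of_nonneg_right (zero_le (a := 1))) ?_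
      rw [dist_comm] at hd
      exact lt_of_lt_of_le hd (min_le_left _ _)
    exact hmain _ _ (rsup_mono hf hss) h1
  · have hb1 : s ≤ s₀ + 1 := by
      rw [NNReal.dist_eq] at hd
      have h2 : (s:ℝ) - s₀ < 1 := lt_of_le_of_lt (le_abs_self _)
        (lt_of_lt_of_le hd (by exact_mod_cast min_le_right δ 1))
      have : (s:ℝ) ≤ (s₀:ℝ) + 1 := by linarith
      exact_mod_cast this
    have h1 : rsup f s ≤ rsup f s₀ + (ε/2).toNNReal :=
      step s₀ s hss hb1 (lt_of_lt_of_le hd (min_le_left _ _))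
    rw [dist_comm]
    exact hmain _ _ (rsup_mono hf hss) h1


variable {E F : Type*} [NormedAddCommGroup E] [NormedAddCommGroup F]

lemma norm_le_supNorm {u : ℕ → F} (hu : BddInput u) (k : ℕ) : ‖u k‖₊ ≤ supNorm u :=
  le_ciSup hu k

lemma bddInput_shift {u : ℕ → F} (hu : BddInput u) (a : ℕ) :
    BddInput (fun k => u (a + k)) := by
  obtain ⟨c, hc⟩ := hu
  refine ⟨c, ?_⟩
  rintro y ⟨k, rfl⟩
  exact hc ⟨a + k, rfl⟩

lemma supNorm_shift_le {u : ℕ → F} (hu : BddInput u) (a : ℕ) :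
    supNorm (fun k => u (a + k)) ≤ supNorm u :=
  ciSup_le fun k => norm_le_supNorm hu (a + k)

lemma sol_shift (G : E → F → E) (ξ : E) (u : ℕ → F) (a : ℕ) :
    ∀ b, sol G ξ u (a + b) = sol G (sol G ξ u a) (fun k => u (a + k)) b
  | 0 => rfl
  | b + 1 => by
    rw [← Nat.add_assoc]
    show G (sol G ξ u (a + b)) (u (a + b)) = _
    rw [sol_shift G ξ u a b]
    rfl

/-- iterates of a continuous monotone sub-identity map tend to zero -/
lemma iterate_tendsto_zero {θ : ℝ≥0 → ℝ≥0} (hc : Continuous θ) (hm : Monotone θ)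
    (hle : ∀ t, θ t ≤ t) (hlt : ∀ t, 0 < t → θ t < t) (a : ℝ≥0) :
    Tendsto (fun n => θ^[n] a) atTop (𝓝 0) := by
  have hanti : Antitone fun n => θ^[n] a := by
    refine antitone_nat_of_succ_le fun n => ?_
    rw [Function.iterate_succ_apply']
    exact hle _
  have htend : Tendsto (fun n => θ^[n] a) atTop (𝓝 (⨅ n, θ^[n] a)) :=
    tendsto_atTop_ciInf hanti (OrderBot.bddBelow _)
  set L := ⨅ n, θ^[n] a with hL
  have h1 : Tendsto (fun n => θ^[n+1] a) atTop (𝓝 L) :=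
    htend.comp (tendsto_add_atTop_nat 1)
  have h2 : Tendsto (fun n => θ (θ^[n] a)) atTop (𝓝 (θ L)) :=
    (hc.tendsto L).comp htend
  have h3 : (fun n => θ^[n+1] a) = fun n => θ (θ^[n] a) := by
    funext n; rw [Function.iterate_succ_apply']
  rw [h3] at h1
  have hfix : θ L = L := tendsto_nhds_unique h2 h1
  rcases eq_or_lt_of_le (zero_le (a := L)) with h0 | h0
  · rwa [← h0] at htend
  · exact absurd hfix (ne_of_lt (hlt L h0))

/-- NNReal arithmetic: (v - e) + e/2 = v - e/2 when e ≤ v -/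
lemma sub_add_half {v e : ℝ≥0} (h : e ≤ v) : v - e + e / 2 = v - e / 2 := by
  have h2 : e / 2 ≤ e := half_le_self (zero_le (a := e))
  rw [← NNReal.coe_inj]
  push_cast [NNReal.coe_sub h, NNReal.coe_sub (le_trans h2 h)]
  ring




variable (e : ℝ≥0 → ℕ → ℝ≥0)

noncomputable def del (s : ℝ≥0) (n : ℕ) : ℝ := (e s n : ℝ) - e s (n + 1)

noncomputable def phi (n : ℕ) (t : ℝ) : ℝ := min 1 (max 0 ((n + 1 : ℕ) - t))

noncomputable def Lr (s : ℝ≥0) (t : ℝ) : ℝ := ∑' n, del e s n * phi n t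

variable {e}

lemma phi_nonneg (n : ℕ) (t : ℝ) : 0 ≤ phi n t :=
  le_min zero_le_one (le_max_left 0 _)

lemma phi_le_one (n : ℕ) (t : ℝ) : phi n t ≤ 1 := min_le_left _ _

lemma phi_continuous (n : ℕ) : Continuous (phi n) :=
  continuous_const.min (continuous_const.max (continuous_const.sub continuous_id))

lemma phi_antitone (n : ℕ) : Antitone (phi n) := fun a b h => by
  unfold phi
  have : ((n+1:ℕ):ℝ) - b ≤ ((n+1:ℕ):ℝ) - a := by linarith
  exact min_le_min le_rfl (max_le_max le_rfl this)

lemma phi_eq_zero {n : ℕ} {t : ℝ} (h : ((n:ℝ) + 1) ≤ t) : phi n t = 0 := by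
  unfold phi
  rw [max_eq_left (by push_cast; linarith), min_eq_right zero_le_one]

lemma phi_eq_one {n : ℕ} {t : ℝ} (h : t ≤ n) : phi n t = 1 := by
  unfold phi
  rw [max_eq_right (by push_cast; linarith), min_eq_left (by push_cast; linarith)]

section props
variable (hanti : ∀ s, Antitone (e s)) (h0 : ∀ s, Tendsto (e s) atTop (𝓝 0))

include hanti in
lemma del_nonneg (s : ℝ≥0) (n : ℕ) : 0 ≤ del e s n :=
  sub_nonneg.2 (by exact_mod_cast hanti s (Nat.le_succ n))

include h0 in
lemma coe_e_tendsto (s : ℝ≥0) : Tendsto (fun n => (e s n : ℝ)) atTop (𝓝 0) := by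
  have := (NNReal.tendsto_coe (f := atTop) (m := e s) (x := 0)).2 (h0 s)
  simpa using this

include hanti h0 in
lemma hasSum_tail (s : ℝ≥0) (m : ℕ) :
    HasSum (fun n => del e s (n + m)) ((e s m : ℝ)) := by
  rw [hasSum_iff_tendsto_nat_of_nonneg (fun n => del_nonneg hanti s (n + m))]
  have hps : ∀ N, ∑ i ∈ Finset.range N, del e s (i + m) = (e s m : ℝ) - e s (N + m) := by
    intro N
    have h4 : ∑ i ∈ Finset.range N, del e s (i + m)
        = ∑ i ∈ Finset.range N, ((e s (i + m) : ℝ) - e s (i + 1 + m)) :=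
      Finset.sum_congr rfl (fun i _ => by unfold del; rw [Nat.add_right_comm])
    rw [h4, Finset.sum_range_sub' (fun i => (e s (i + m) : ℝ)) N]
    simp
  simp only [hps]
  have h1 : Tendsto (fun N : ℕ => (e s (N + m) : ℝ)) atTop (𝓝 0) :=
    (coe_e_tendsto h0 s).comp (tendsto_atTop_mono (fun N => Nat.le_add_right N m) tendsto_id)
  simpa using (tendsto_const_nhds (x := (e s m : ℝ))).sub h1

include hanti h0 in
lemma summable_del (s : ℝ≥0) : Summable (del e s) := by
  have := (hasSum_tail hanti h0 s 0).summable
  simpa using this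

include hanti h0 in
lemma summable_term (s : ℝ≥0) (t : ℝ) : Summable (fun n => del e s n * phi n t) := by
  refine Summable.of_nonneg_of_le
    (fun n => mul_nonneg (del_nonneg hanti s n) (phi_nonneg n t)) (fun n => ?_)
    (summable_del hanti h0 s)
  calc del e s n * phi n t ≤ del e s n * 1 :=
        mul_le_mul_of_nonneg_left (phi_le_one n t) (del_nonneg hanti s n)
  _ = del e s n := mul_one _

include hanti h0 in
lemma Lr_closed_form (s : ℝ≥0) (j : ℕ) (t : ℝ) (h1 : (j:ℝ) ≤ t) (h2 : t ≤ j + 1) :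
    Lr e s t = del e s j * ((j + 1) - t) + (e s (j + 1) : ℝ) := by
  unfold Lr
  rw [← Summable.sum_add_tsum_nat_add (j + 1) (summable_term hanti h0 s t)]
  have hhead : ∑ i ∈ Finset.range (j + 1), del e s i * phi i t
      = del e s j * ((j + 1) - t) := by
    rw [Finset.sum_eq_single_of_mem j (Finset.self_mem_range_succ j)]
    · unfold phi
      rw [max_eq_right (by push_cast; linarith), min_eq_right (by push_cast; linarith)]
      push_cast; ring
    · intro i hi hne
      have hij : i < j := lt_of_le_of_ne (Nat.lt_succ_iff.1 (Finset.mem_range.1 hi)) hne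
      have h3 : ((i:ℝ) + 1) ≤ t := by
        have h5 : ((i+1:ℕ):ℝ) ≤ (j:ℝ) := Nat.cast_le.2 hij
        push_cast at h5; linarith
      rw [phi_eq_zero h3, mul_zero]
  have htail : ∑' (i : ℕ), del e s (i + (j + 1)) * phi (i + (j + 1)) t
      = (e s (j + 1) : ℝ) := by
    have heq : ∀ n : ℕ, del e s (n + (j + 1)) * phi (n + (j + 1)) t
        = del e s (n + (j + 1)) := by
      intro n
      rw [phi_eq_one (by push_cast; linarith), mul_one]
    rw [tsum_congr heq]
    exact (hasSum_tail hanti h0 s (j + 1)).tsum_eq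
  rw [hhead, htail]

include hanti h0 in
lemma Lr_nonneg (s : ℝ≥0) (t : ℝ) : 0 ≤ Lr e s t :=
  tsum_nonneg fun n => mul_nonneg (del_nonneg hanti s n) (phi_nonneg n t)

include hanti h0 in
lemma Lr_anti (s : ℝ≥0) : Antitone (Lr e s) := by
  intro a b h
  refine Summable.tsum_le_tsum (fun n => ?_) (summable_term hanti h0 s b) (summable_term hanti h0 s a)
  exact mul_le_mul_of_nonneg_left (phi_antitone n h) (del_nonneg hanti s n)

include hanti h0 in
lemma Lr_continuous (s : ℝ≥0) : Continuous (Lr e s) := by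
  refine continuous_tsum (fun n => continuous_const.mul (phi_continuous n))
    (summable_del hanti h0 s) (fun n x => ?_)
  rw [Real.norm_eq_abs, abs_of_nonneg (mul_nonneg (del_nonneg hanti s n) (phi_nonneg n x))]
  calc del e s n * phi n x ≤ del e s n * 1 :=
      mul_le_mul_of_nonneg_left (phi_le_one n x) (del_nonneg hanti s n)
  _ = del e s n := mul_one _

include hanti h0 in
lemma Lr_closed_form' (s : ℝ≥0) (j : ℕ) (t : ℝ) (h1 : (j:ℝ) ≤ t) (h2 : t ≤ j + 1) :
    Lr e s t = ((j + 1) - t) * (e s j : ℝ) + (t - j) * (e s (j + 1) : ℝ) := by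
  rw [Lr_closed_form hanti h0 s j t h1 h2]
  unfold del
  ring

include hanti h0 in
lemma Lr_le_floor (s : ℝ≥0) (t : ℝ) (ht : 0 ≤ t) : Lr e s t ≤ (e s ⌊t⌋₊ : ℝ) := by
  set j := ⌊t⌋₊ with hj
  have h1 : (j:ℝ) ≤ t := Nat.floor_le ht
  have h2 : t ≤ j + 1 := (Nat.lt_floor_add_one t).le
  rw [Lr_closed_form' hanti h0 s j t h1 h2]
  have he : (e s (j+1) : ℝ) ≤ e s j := by exact_mod_cast hanti s (Nat.le_succ j)
  nlinarith [NNReal.coe_nonneg (e s (j+1)), NNReal.coe_nonneg (e s j)]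

include hanti h0 in
lemma Lr_ge (s : ℝ≥0) (j : ℕ) (t : ℝ) (h1 : (j:ℝ) ≤ t) (h2 : t ≤ j + 1) :
    (e s (j + 1) : ℝ) ≤ Lr e s t := by
  rw [Lr_closed_form hanti h0 s j t h1 h2]
  have := mul_nonneg (del_nonneg hanti s j) (by linarith : (0:ℝ) ≤ (j + 1) - t)
  linarith

include hanti h0 in
lemma Lr_tendsto_zero (s : ℝ≥0) : Tendsto (Lr e s) atTop (𝓝 0) := by
  have hupper : Tendsto (fun t : ℝ => (e s ⌊t⌋₊ : ℝ)) atTop (𝓝 0) :=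
    (coe_e_tendsto h0 s).comp tendsto_nat_floor_atTop
  refine tendsto_of_tendsto_of_tendsto_of_le_of_le' tendsto_const_nhds hupper ?_ ?_
  · exact Eventually.of_forall fun t => Lr_nonneg hanti h0 s t
  · filter_upwards [eventually_ge_atTop (0:ℝ)] with t ht
    exact Lr_le_floor hanti h0 s t ht

include hanti h0 in
lemma Lr_mono_s (hm : ∀ n, Monotone (fun s => e s n)) (t : ℝ) (ht : 0 ≤ t) :
    Monotone (fun s => Lr e s t) := by
  intro a b hab
  set j := ⌊t⌋₊ with hj
  have h1 : (j:ℝ) ≤ t := Nat.floor_le ht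
  have h2 : t ≤ j + 1 := (Nat.lt_floor_add_one t).le
  simp only
  rw [Lr_closed_form' hanti h0 a j t h1 h2, Lr_closed_form' hanti h0 b j t h1 h2]
  have e1 : (e a j : ℝ) ≤ e b j := by exact_mod_cast hm j hab
  have e2 : (e a (j+1) : ℝ) ≤ e b (j+1) := by exact_mod_cast hm (j+1) hab
  have c1 : (0:ℝ) ≤ (j + 1) - t := by linarith
  have c2 : (0:ℝ) ≤ t - j := by linarith
  nlinarith

include hanti h0 in
lemma Lr_cont_s (hcont : ∀ n, Continuous (fun s => e s n)) (t : ℝ) (ht : 0 ≤ t) :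
    Continuous (fun s => Lr e s t) := by
  set j := ⌊t⌋₊ with hj
  have h1 : (j:ℝ) ≤ t := Nat.floor_le ht
  have h2 : t ≤ j + 1 := (Nat.lt_floor_add_one t).le
  have : (fun s => Lr e s t)
      = fun s => ((j + 1) - t) * (e s j : ℝ) + (t - j) * (e s (j + 1) : ℝ) := by
    funext s; exact Lr_closed_form' hanti h0 s j t h1 h2
  rw [this]
  exact (continuous_const.mul ((NNReal.continuous_coe).comp (hcont j))).add
    (continuous_const.mul ((NNReal.continuous_coe).comp (hcont (j+1))))

end props




section beta

variable {θ Φ ainv α₂ : ℝ≥0 → ℝ≥0} {M : ℕ}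

/-- Construction of the KL function from the contraction θ and the wrappers. -/
lemma exists_KL (hθc : Continuous θ) (hθm : Monotone θ) (hθle : ∀ t, θ t ≤ t)
    (hθlt : ∀ t, 0 < t → θ t < t) (hθ0 : θ 0 = 0)
    (hΦ : K0 Φ) (hac : Continuous ainv) (ham : Monotone ainv) (ha0 : ainv 0 = 0)
    (hα₂ : K0 α₂) (hM : 1 ≤ M) :
    ∃ β : ℝ≥0 → ℝ≥0 → ℝ≥0, ClassKL β ∧
      ∀ (s : ℝ≥0) (k : ℕ), Φ (2 * ainv (θ^[k / M] (α₂ s))) ≤ β s k := by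
  classical
  set e : ℝ≥0 → ℕ → ℝ≥0 := fun s n => Φ (2 * ainv (θ^[n - 1] (α₂ s))) with he
  have hiter_anti : ∀ a : ℝ≥0, Antitone (fun n => θ^[n] a) := by
    intro a
    refine antitone_nat_of_succ_le fun n => ?_
    rw [Function.iterate_succ_apply']
    exact hθle _
  have hanti : ∀ s, Antitone (e s) := by
    intro s n m h
    exact hΦ.2.1 (by gcongr; exact ham (hiter_anti (α₂ s) (Nat.sub_le_sub_right h 1)))
  have hwrap : Continuous (fun x => Φ (2 * ainv x)) :=
    hΦ.1.comp (continuous_const.mul hac)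
  have hwrap0 : Φ (2 * ainv 0) = 0 := by rw [ha0, mul_zero, hΦ.2.2]
  have h0 : ∀ s, Tendsto (e s) atTop (𝓝 0) := by
    intro s
    have h1 : Tendsto (fun n => θ^[n] (α₂ s)) atTop (𝓝 0) :=
      iterate_tendsto_zero hθc hθm hθle hθlt (α₂ s)
    have h2 : Tendsto (fun n : ℕ => θ^[n - 1] (α₂ s)) atTop (𝓝 0) :=
      h1.comp (tendsto_sub_atTop_nat 1)
    have h3 := (hwrap.tendsto 0).comp h2
    rw [hwrap0] at h3
    exact h3
  have hm_s : ∀ n, Monotone (fun s => e s n) := by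
    intro n a b hab
    exact hΦ.2.1 (by gcongr; exact ham ((hθm.iterate _) (hα₂.2.1 hab)))
  have hc_s : ∀ n, Continuous (fun s => e s n) :=
    fun n => hwrap.comp ((hθc.iterate _).comp hα₂.1)
  have he0 : ∀ n, e 0 n = 0 := by
    intro n
    simp only [he, hα₂.2.2, Function.iterate_fixed hθ0, ha0, mul_zero, hΦ.2.2]
  have hMpos : (0:ℝ) < M := by exact_mod_cast hM
  refine ⟨fun s t => Real.toNNReal (Lr e s ((t : ℝ) / M)) + s * (1 + t)⁻¹, ⟨?_, ?_⟩, ?_⟩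
  · -- class K in s for each fixed t
    intro t
    set τ : ℝ := (t : ℝ) / M with hτ
    have hτ0 : 0 ≤ τ := div_nonneg t.coe_nonneg hMpos.le
    refine ⟨?_, ?_, ?_⟩
    · exact (continuous_real_toNNReal.comp (Lr_cont_s hanti h0 hc_s τ hτ0)).add
        (continuous_id.mul continuous_const)
    · intro a b hab
      have h1 : Real.toNNReal (Lr e a τ) ≤ Real.toNNReal (Lr e b τ) :=
        Real.toNNReal_le_toNNReal (Lr_mono_s hanti h0 hm_s τ hτ0 hab.le)
      have hc : (0:ℝ≥0) < (1 + t)⁻¹ := by positivity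
      exact add_lt_add_of_le_of_lt h1 (mul_lt_mul_of_pos_right hab hc)
    · have hz : Lr e 0 τ = 0 := by
        refine le_antisymm ?_ (Lr_nonneg hanti h0 0 τ)
        calc Lr e 0 τ ≤ (e 0 ⌊τ⌋₊ : ℝ) := Lr_le_floor hanti h0 0 τ hτ0
        _ = 0 := by rw [he0]; simp
      simp only [hτ] at hz; simp [hz]
  · -- KL decay in t for s > 0
    intro s hs
    have hcoeτ : Continuous (fun t : ℝ≥0 => (t : ℝ) / M) :=
      (NNReal.continuous_coe).div_const M
    refine ⟨?_, ?_, ?_⟩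
    · refine ((continuous_real_toNNReal.comp ((Lr_continuous hanti h0 s).comp hcoeτ))).add
        (continuous_const.mul ?_)
      exact (continuous_const.add continuous_id).inv₀ (fun t => by simp)
    · intro a b hab
      have h1 : Real.toNNReal (Lr e s ((b:ℝ)/M)) ≤ Real.toNNReal (Lr e s ((a:ℝ)/M)) := by
        refine Real.toNNReal_le_toNNReal (Lr_anti hanti h0 s ?_)
        have h0' : (a:ℝ) ≤ b := hab.le
        exact div_le_div_of_nonneg_right h0' hMpos.le
      have h2 : s * (1 + b)⁻¹ < s * (1 + a)⁻¹ := by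
        refine mul_lt_mul_of_pos_left ?_ hs
        refine NNReal.inv_lt_inv (by positivity) ?_
        exact add_lt_add_right hab 1
      exact add_lt_add_of_le_of_lt h1 h2
    · have hτtop : Tendsto (fun t : ℝ≥0 => (t : ℝ) / M) atTop atTop := by
        refine Tendsto.atTop_div_const hMpos ?_
        exact NNReal.tendsto_coe_atTop.2 tendsto_id
      have h1 : Tendsto (fun t : ℝ≥0 => Real.toNNReal (Lr e s ((t:ℝ)/M))) atTop (𝓝 0) := by
        have h2 := (Lr_tendsto_zero hanti h0 s).comp hτtop
        have h3 := (continuous_real_toNNReal.tendsto 0).comp h2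
        simpa [Function.comp_def] using h3
      have h4 : Tendsto (fun t : ℝ≥0 => s * (1 + t)⁻¹) atTop (𝓝 0) := by
        rw [← NNReal.tendsto_coe]
        have h5 : Tendsto (fun t : ℝ≥0 => ((1:ℝ) + t)) atTop atTop := by
          refine tendsto_atTop_add_const_left _ 1 ?_
          exact NNReal.tendsto_coe_atTop.2 tendsto_id
        have h6 := (tendsto_inv_atTop_zero).comp h5
        have h7 := h6.const_mul (s:ℝ)
        simpa [NNReal.coe_inv] using h7
      simpa using h1.add h4
  · -- the bound at integer times
    intro s k
    set j := k / M with hj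
    set τ : ℝ := ((k : ℝ≥0) : ℝ) / M with hτ
    have hτeq : τ = (k : ℝ) / M := by rw [hτ]; norm_num
    have hfl : ⌊τ⌋₊ = j := by
      rw [hτeq, Nat.floor_div_natCast, Nat.floor_natCast]
    have hτ0 : 0 ≤ τ := by rw [hτeq]; positivity
    have h1 : (j:ℝ) ≤ τ := by rw [← hfl]; exact Nat.floor_le hτ0
    have h2 : τ ≤ j + 1 := by
      rw [← hfl]; exact (Nat.lt_floor_add_one τ).le
    have h3 : (e s (j+1) : ℝ) ≤ Lr e s τ := Lr_ge hanti h0 s j τ h1 h2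
    have h4 : e s (j+1) ≤ Real.toNNReal (Lr e s τ) := by
      rw [← Real.toNNReal_coe (r := e s (j+1))]
      exact Real.toNNReal_le_toNNReal h3
    have h5 : e s (j+1) = Φ (2 * ainv (θ^[j] (α₂ s))) := by
      simp [he]
    calc Φ (2 * ainv (θ^[k / M] (α₂ s))) = e s (j+1) := h5.symm
    _ ≤ Real.toNNReal (Lr e s τ) := h4
    _ ≤ _ := le_self_add

end beta

lemma exists_growth {G : E → F → E} {ω₁ ω₂ : ℝ≥0 → ℝ≥0} (hω₁ : K0 ω₁) (hω₂ : K0 ω₂)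
    (hGb : ∀ ξ μ, ‖G ξ μ‖₊ ≤ ω₁ ‖ξ‖₊ + ω₂ ‖μ‖₊) (n : ℕ) :
    ∃ Φ Ψ : ℝ≥0 → ℝ≥0, K0 Φ ∧ K0 Ψ ∧
      ∀ r ≤ n, ∀ (ξ : E) (u : ℕ → F), BddInput u →
        ‖sol G ξ u r‖₊ ≤ Φ ‖ξ‖₊ + Ψ (supNorm u) := by
  induction n with
  | zero =>
    refine ⟨fun s => s, fun _ => 0, K0.id, K0.zero, ?_⟩
    intro r hr ξ u hu
    have : r = 0 := Nat.le_zero.1 hr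
    subst this
    simp [sol]
  | succ n ih =>
    obtain ⟨Φ, Ψ, hΦ, hΨ, hb⟩ := ih
    refine ⟨fun s => max (Φ s) (ω₁ (2 * Φ s)),
            fun s => max (Ψ s) (ω₁ (2 * Ψ s) + ω₂ s),
            hΦ.max (hω₁.two_mul.comp hΦ), hΨ.max ((hω₁.two_mul.comp hΨ).add hω₂), ?_⟩
    intro r hr ξ u hu
    rcases Nat.lt_succ_iff_lt_or_eq.1 (Nat.lt_succ_of_le hr) with h | h
    · exact le_trans (hb r (Nat.lt_succ_iff.1 h) ξ u hu)
        (add_le_add (le_max_left _ _) (le_max_left _ _))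
    · subst h
      have h1 : ‖sol G ξ u (n+1)‖₊ ≤ ω₁ ‖sol G ξ u n‖₊ + ω₂ ‖u n‖₊ := hGb _ _
      calc ‖sol G ξ u (n+1)‖₊ ≤ ω₁ ‖sol G ξ u n‖₊ + ω₂ ‖u n‖₊ := h1
      _ ≤ ω₁ (Φ ‖ξ‖₊ + Ψ (supNorm u)) + ω₂ (supNorm u) :=
          add_le_add (hω₁.2.1 (hb n le_rfl ξ u hu)) (hω₂.2.1 (norm_le_supNorm hu n))
      _ ≤ (ω₁ (2 * Φ ‖ξ‖₊) + ω₁ (2 * Ψ (supNorm u))) + ω₂ (supNorm u) :=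
          add_le_add_left (hω₁.subadd _ _) _
      _ = ω₁ (2 * Φ ‖ξ‖₊) + (ω₁ (2 * Ψ (supNorm u)) + ω₂ (supNorm u)) := by ring
      _ ≤ _ := add_le_add (le_max_right _ _) (le_max_right _ _)

end FSL
/-- If G is globally K-bounded and there exists a dissipative
finite-step ISS Lyapunov function for the system, then the system is ISS. -/
theorem finite_step_lyapunov_implies_ISS
    {E F : Type*} [NormedAddCommGroup E] [NormedSpace ℝ E] [FiniteDimensional ℝ E]
    [NormedAddCommGroup F] [NormedSpace ℝ F] [FiniteDimensional ℝ F]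
    (G : E → F → E) (hG : GloballyKBounded G)
    (hV : ∃ V : E → ℝ≥0, DissFinStepLyap G V) :
    ISS G := by
  classical
  open FSL in
  obtain ⟨ω₁, ω₂, hω₁, hω₂, hGb⟩ := hG
  obtain ⟨V, M, ⟨α₁, α₂, hα₁, hα₂, hV12⟩, hM, σ, ρ, hσ, hρ, hη, hLyap⟩ := hV
  set η : ℝ≥0 → ℝ≥0 := fun s => s - ρ s with hηdef
  have hMpos : 0 < M := hM
  have hη0 : η 0 = 0 := hη.1.2.2
  have hηpos : ∀ x, 0 < x → 0 < η x := by
    intro x hx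
    have := hη.1.2.1 hx
    rwa [hη0] at this
  have hρle : ∀ x, ρ x ≤ x := by
    intro x
    rcases eq_or_lt_of_le (zero_le (a := x)) with h | h
    · rw [← h, hρ.2.1]
    · have : 0 < x - ρ x := hηpos x h
      exact (tsub_pos_iff_lt.1 this).le
  have hρeq : ∀ x, ρ x = x - η x := by
    intro x
    rw [hηdef]
    exact (tsub_tsub_cancel_of_le (hρle x)).symm
  have hηle : ∀ x, η x ≤ x := fun x => tsub_le_self
  obtain ⟨ainv, hac, ham, ha0, hali, hari⟩ := exists_kinf_inv hα₁
  obtain ⟨ginv, hgc, hgm, hg0, hgli, hgri⟩ := exists_kinf_inv hη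
  set f : ℝ≥0 → ℝ≥0 := fun x => x - η x / 2 with hfdef
  have hfc : Continuous f := continuous_id.sub (hη.1.1.div_const 2)
  have hf0 : f 0 = 0 := by simp [hfdef, hη0]
  have hfle : ∀ t, f t ≤ t := fun t => tsub_le_self
  have hflt : ∀ t, 0 < t → f t < t := fun t ht =>
    tsub_lt_self ht (half_pos (hηpos t ht))
  set θ : ℝ≥0 → ℝ≥0 := rsup f with hθdef
  have hθc : Continuous θ := rsup_continuous hfc
  have hθm : Monotone θ := rsup_mono hfc
  have hθ0 : θ 0 = 0 := rsup_zero hf0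
  have hθle : ∀ s, θ s ≤ s := fun s => rsup_le_self hfle
  have hθlt : ∀ s, 0 < s → θ s < s := fun s => rsup_lt_self hfc hf0 hflt
  have hfθ : ∀ s, f s ≤ θ s := fun s => le_rsup hfc le_rfl
  have hρf : ∀ x, ρ x ≤ f x := by
    intro x
    rw [hρeq x]
    exact tsub_le_tsub_left (half_le_self (zero_le (a := _))) x
  set B : ℝ≥0 → ℝ≥0 := fun c => θ (ginv (2 * c)) + 2 * c with hBdef
  have hkey : ∀ x c, ρ x + c ≤ max (θ x) (B c) := by
    intro x c
    rcases le_total x (ginv (2 * c)) with hx | hx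
    · refine le_trans ?_ (le_max_right _ _)
      refine add_le_add ?_ (le_mul_of_one_le_left (zero_le (a := c)) one_le_two)
      exact le_trans (hρf x) (le_trans (hfθ x) (hθm hx))
    · refine le_trans ?_ (le_max_left _ _)
      have h2c : 2 * c ≤ η x := by
        have := hη.1.2.1.monotone hx
        rwa [hgri (2 * c)] at this
      have hc2 : c ≤ η x / 2 := by
        rw [le_div_iff₀ two_pos, mul_comm]
        exact h2c
      calc ρ x + c ≤ (x - η x) + η x / 2 := by
            rw [hρeq x]
            exact add_le_add_right hc2 _
      _ = x - η x / 2 := sub_add_half (hηle x)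
      _ = f x := rfl
      _ ≤ θ x := hfθ x
  obtain ⟨Φ, Ψ, hΦ, hΨ, hgrow⟩ := exists_growth (classK_k0 hω₁) (classK_k0 hω₂) hGb M
  obtain ⟨β, hβKL, hβge⟩ := exists_KL hθc hθm hθle hθlt hθ0 hΦ hac ham ha0 (classK_k0 hα₂.1) hM
  have hBm : Monotone B := by
    intro a b h
    exact add_le_add (hθm (hgm (by gcongr))) (by gcongr)
  have hBc : Continuous B := by
    refine Continuous.add ?_ (continuous_const.mul continuous_id)
    exact hθc.comp (hgc.comp (continuous_const.mul continuous_id))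
  refine ⟨β, fun w => Φ (2 * ainv (B (σ w))) + Ψ w + w, hβKL, ⟨?_, ?_, ?_⟩, ?_⟩
  · -- continuity of γ
    refine Continuous.add (Continuous.add ?_ hΨ.1) continuous_id
    exact hΦ.1.comp (continuous_const.mul (hac.comp (hBc.comp hσ.1)))
  · -- strict monotonicity of γ
    intro a b h
    have h1 : Φ (2 * ainv (B (σ a))) ≤ Φ (2 * ainv (B (σ b))) := by
      refine hΦ.2.1 ?_
      gcongr
      exact ham (hBm (hσ.2.1.monotone h.le))
    exact add_lt_add_of_le_of_lt (add_le_add h1 (hΨ.2.1 h.le)) h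
  · -- γ 0 = 0
    have hB0 : B (σ 0) = 0 := by
      rw [hσ.2.2, hBdef]
      simp [hg0, hθ0]
    simp [hB0, ha0, hΦ.2.2, hΨ.2.2]
  · -- main estimate
    intro ξ u hu k
    set w := supNorm u with hw
    set c := σ w with hcdef
    set s := ‖ξ‖₊ with hs
    set v : ℕ → ℝ≥0 := fun j => V (sol G ξ u (M * j)) with hv
    have hvrec : ∀ j, v (j+1) ≤ ρ (v j) + c := by
      intro j
      have hms : M * (j+1) = M * j + M := by ring
      have h1 := hLyap (sol G ξ u (M * j)) (fun i => u (M * j + i))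
        (bddInput_shift hu (M * j))
      calc v (j+1) = V (sol G ξ u (M * j + M)) := by rw [hv]; simp only [hms]
      _ = V (sol G (sol G ξ u (M * j)) (fun i => u (M * j + i)) M) := by
            rw [sol_shift]
      _ ≤ ρ (v j) + σ (supNorm fun i => u (M * j + i)) := h1
      _ ≤ ρ (v j) + c := add_le_add_right (hσ.2.1.monotone (supNorm_shift_le hu _)) _
    have hvb : ∀ j, v j ≤ max (θ^[j] (v 0)) (B c) := by
      intro j
      induction j with
      | zero => simpa using le_max_left (v 0) (B c)
      | succ j ih =>
        calc v (j+1) ≤ ρ (v j) + c := hvrec j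
        _ ≤ max (θ (v j)) (B c) := hkey _ _
        _ ≤ max (θ (max (θ^[j] (v 0)) (B c))) (B c) :=
            max_le_max (hθm ih) le_rfl
        _ ≤ max (θ^[j+1] (v 0)) (B c) := by
            rw [hθm.map_max, Function.iterate_succ_apply']
            exact max_le (max_le (le_max_left _ _)
              (le_trans (hθle _) (le_max_right _ _))) (le_max_right _ _)
    set j := k / M with hjdef
    set r := k % M with hrdef
    have hk : M * j + r = k := Nat.div_add_mod k M
    have hrM : r ≤ M := (Nat.mod_lt k hMpos).le
    have hx1 : ‖sol G ξ u k‖₊ ≤ Φ ‖sol G ξ u (M * j)‖₊ + Ψ w := by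
      have h1 : sol G ξ u k = sol G (sol G ξ u (M * j)) (fun i => u (M * j + i)) r := by
        rw [← hk]
        exact sol_shift G ξ u (M * j) r
      rw [h1]
      refine le_trans (hgrow r hrM _ _ (bddInput_shift hu _)) ?_
      exact add_le_add_right (hΨ.2.1 (supNorm_shift_le hu _)) _
    have hv0 : v 0 = V ξ := by rw [hv]; simp [sol]
    have hα₁x : α₁ ‖sol G ξ u (M * j)‖₊ ≤ max (θ^[j] (α₂ s)) (B c) := by
      refine le_trans (hV12 _).1 (le_trans (hvb j) ?_)
      refine max_le_max ?_ le_rfl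
      refine (hθm.iterate j) ?_
      rw [hv0]
      exact (hV12 ξ).2
    have hxj : ‖sol G ξ u (M * j)‖₊ ≤ ainv (θ^[j] (α₂ s)) + ainv (B c) := by
      have h2 := ham hα₁x
      rw [hali] at h2
      refine le_trans h2 ?_
      rw [ham.map_max]
      exact max_le le_self_add le_add_self
    calc ‖sol G ξ u k‖₊ ≤ Φ ‖sol G ξ u (M * j)‖₊ + Ψ w := hx1
    _ ≤ Φ (ainv (θ^[j] (α₂ s)) + ainv (B c)) + Ψ w :=
        add_le_add_left (hΦ.2.1 hxj) _
    _ ≤ (Φ (2 * ainv (θ^[j] (α₂ s))) + Φ (2 * ainv (B c))) + Ψ w :=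
        add_le_add_left (hΦ.subadd _ _) _
    _ = Φ (2 * ainv (θ^[k / M] (α₂ s))) + (Φ (2 * ainv (B c)) + Ψ w) := by
        rw [← hjdef]; ring
    _ ≤ β s k + (Φ (2 * ainv (B (σ w))) + Ψ w + w) := by
        refine add_le_add (hβge s k) ?_
        rw [← hcdef]
        exact le_add_right le_rfl
end

section
/- Suppose G is globally K-bounded with a linear first bound, i.e. ‖G(ξ,μ)‖ ≤ w₁‖ξ‖ + ω₂(‖μ‖) for some constant w₁ > 0 and some class-K function ω₂. If there exist a function V : ℝⁿ → [0,∞), an M ∈ ℕ with M ≥ 1, and constants b ≥ a > 0, c ∈ [0,1), d > 0, λ > 0 such that a‖ξ‖^λ ≤ V(ξ) ≤ b‖ξ‖^λ for all ξ ∈ ℝⁿ and V(x(M,ξ,u)) ≤ c V(ξ) + d ‖u‖∞ for all ξ ∈ ℝⁿ and all bounded inputs u, then the system is exponentially input-to-state stable (expISS). -/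
open scoped NNReal

variable {E F : Type*} [NormedAddCommGroup E] [NormedAddCommGroup F]

section Aux

variable {E F : Type*} [NormedAddCommGroup E] [NormedAddCommGroup F]

lemma sol_add_aux (G : E → F → E) (ξ : E) (u : ℕ → F) (m k : ℕ) :
    sol G ξ u (m + k) = sol G (sol G ξ u m) (fun i => u (m + i)) k := by
  induction k with
  | zero => rfl
  | succ k ih =>
    show G (sol G ξ u (m + k)) (u (m + k)) = _
    rw [ih]
    rfl

lemma shift_bddInput_aux {u : ℕ → F} (hu : BddInput u) (m : ℕ) :
    BddInput (fun i => u (m + i)) := by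
  obtain ⟨L, hL⟩ := hu
  exact ⟨L, by rintro x ⟨i, rfl⟩; exact hL ⟨m + i, rfl⟩⟩

lemma norm_le_supNorm_aux {u : ℕ → F} (hu : BddInput u) (i : ℕ) :
    ‖u i‖₊ ≤ supNorm u := le_ciSup hu i

lemma shift_supNorm_aux {u : ℕ → F} (hu : BddInput u) (m : ℕ) :
    supNorm (fun i => u (m + i)) ≤ supNorm u :=
  ciSup_le fun i => le_ciSup hu (m + i)

lemma add_rpow_le_aux (x y : ℝ≥0) {p : ℝ} (hp : 0 ≤ p) :
    (x + y) ^ p ≤ 2 ^ p * (x ^ p + y ^ p) := by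
  calc (x + y) ^ p ≤ (2 * max x y) ^ p := by
        refine NNReal.rpow_le_rpow ?_ hp
        rw [two_mul]
        exact add_le_add (le_max_left _ _) (le_max_right _ _)
    _ = 2 ^ p * (max x y) ^ p := NNReal.mul_rpow
    _ ≤ 2 ^ p * (x ^ p + y ^ p) := by
        gcongr
        rcases le_total x y with h | h
        · rw [max_eq_right h]; exact le_add_self
        · rw [max_eq_left h]; exact le_self_add

end Aux

/-- If G is globally K-bounded with a linear first bound, and there
is a dissipative finite-step ISS Lyapunov function with power-type bounds and a
linear decrease, then the system is exponentially ISS. -/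
theorem exp_finite_step_lyapunov_implies_expISS
    {E F : Type*} [NormedAddCommGroup E] [NormedSpace ℝ E] [FiniteDimensional ℝ E]
    [NormedAddCommGroup F] [NormedSpace ℝ F] [FiniteDimensional ℝ F]
    (G : E → F → E)
    (w₁ : ℝ≥0) (hw₁ : 0 < w₁) (ω₂ : ℝ≥0 → ℝ≥0) (hω₂ : ClassK ω₂)
    (hbound : ∀ ξ μ, ‖G ξ μ‖₊ ≤ w₁ * ‖ξ‖₊ + ω₂ ‖μ‖₊)
    (V : E → ℝ≥0) (M : ℕ) (hM : 1 ≤ M)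
    (a b c d : ℝ≥0) (lam : ℝ)
    (ha : 0 < a) (hab : a ≤ b) (hc : c < 1) (hd : 0 < d) (hlam : 0 < lam)
    (hVbounds : ∀ ξ, a * ‖ξ‖₊ ^ lam ≤ V ξ ∧ V ξ ≤ b * ‖ξ‖₊ ^ lam)
    (hVdec : ∀ ξ u, BddInput u → V (sol G ξ u M) ≤ c * V ξ + d * supNorm u) :
    ExpISS G := by
  -- constants
  set s0 : ℝ := 1 / lam with hs0
  have hp : (0:ℝ) < 1 / lam := by positivity
  set c' : ℝ≥0 := max c (1/2) with hc'def
  have hc'lt : c' < 1 := max_lt hc (by rw [one_div]; exact inv_lt_one_of_one_lt₀ one_lt_two)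
  have hc'pos : (0:ℝ≥0) < c' := lt_of_lt_of_le (by norm_num) (le_max_right _ _)
  have hc'ne : c' ≠ 0 := hc'pos.ne'
  have h1c : (0:ℝ≥0) < 1 - c' := tsub_pos_of_lt hc'lt
  set w' : ℝ≥0 := max 1 w₁ with hw'def
  have hw'1 : (1:ℝ≥0) ≤ w' := le_max_left _ _
  set W : ℝ≥0 := w' ^ M with hWdef
  have hW1 : (1:ℝ≥0) ≤ W := one_le_pow₀ hw'1
  have hMpos : (0:ℝ) < (M:ℝ) := by exact_mod_cast Nat.lt_of_lt_of_le Nat.zero_lt_one hM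
  set p : ℝ := 1 / lam with hpdef
  set κ : ℝ≥0 := c' ^ (p / M : ℝ) with hκdef
  have hκlt : κ < 1 := NNReal.rpow_lt_one hc'lt (by positivity)
  set B : ℝ≥0 := c' ^ (-(p / M) * ((M:ℝ) - 1)) with hBdef
  set A : ℝ≥0 := W * 2 ^ p * b ^ p * (a ^ p)⁻¹ * B with hAdef
  set C : ℝ≥0 := max 1 A with hCdef
  set Eco : ℝ≥0 := W * 2 ^ p * (d / (1 - c')) ^ p * (a ^ p)⁻¹ with hEdef
  have hEpos : 0 < Eco := by
    rw [hEdef]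
    have h2 : (0:ℝ≥0) < (2:ℝ≥0) ^ p := NNReal.rpow_pos (by norm_num)
    have hdp : (0:ℝ≥0) < (d / (1 - c')) ^ p := NNReal.rpow_pos (by positivity)
    have hap : (0:ℝ≥0) < a ^ p := NNReal.rpow_pos ha
    positivity
  have hMW : (0:ℝ≥0) < (M:ℝ≥0) * W := by
    have : (0:ℝ≥0) < (M:ℝ≥0) := by exact_mod_cast Nat.lt_of_lt_of_le Nat.zero_lt_one hM
    positivity
  set γ : ℝ≥0 → ℝ≥0 := fun s => Eco * s ^ p + (M * W) * ω₂ s with hγdef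
  obtain ⟨hω₂c, hω₂m, hω₂0⟩ := hω₂
  have hγK : ClassK γ := by
    refine ⟨?_, ?_, ?_⟩
    · exact (continuous_const.mul (NNReal.continuous_rpow_const hp.le)).add
        (continuous_const.mul hω₂c)
    · have h1 : StrictMono fun s : ℝ≥0 => Eco * s ^ p := fun x y hxy =>
        mul_lt_mul_of_pos_left (NNReal.rpow_lt_rpow hxy hp) hEpos
      have h2 : StrictMono fun s : ℝ≥0 => ((M:ℝ≥0) * W) * ω₂ s := fun x y hxy =>
        mul_lt_mul_of_pos_left (hω₂m hxy) hMW
      exact h1.add h2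
    · simp [hγdef, NNReal.zero_rpow hp.ne', hω₂0]
  refine ⟨C, κ, γ, le_max_left _ _, hκlt, hγK, ?_⟩
  intro ξ u hu k
  set s : ℝ≥0 := supNorm u with hsdef
  set D : ℝ≥0 := d * s / (1 - c') with hDdef
  -- modified decrease with c'
  have hVdec' : ∀ (ζ : E) (v : ℕ → F), BddInput v →
      V (sol G ζ v M) ≤ c' * V ζ + d * supNorm v := by
    intro ζ v hv
    refine (hVdec ζ v hv).trans ?_
    gcongr
    exact le_max_left _ _
  -- block decay
  have hblock : ∀ j : ℕ, V (sol G ξ u (j * M)) ≤ c' ^ j * V ξ + D := by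
    intro j
    induction j with
    | zero => simpa [sol] using le_self_add
    | succ j ih =>
      have heq : (j + 1) * M = j * M + M := by ring
      rw [heq, sol_add_aux]
      have h1 := hVdec' (sol G ξ u (j * M)) (fun i => u (j * M + i))
        (shift_bddInput_aux hu (j * M))
      have h2 : supNorm (fun i => u (j * M + i)) ≤ s := shift_supNorm_aux hu (j * M)
      have hDkey : c' * D + d * s = D := by
        have hds : D * (1 - c') = d * s := div_mul_cancel₀ _ h1c.ne'
        calc c' * D + d * s = D * (c' + (1 - c')) := by rw [mul_add, ← hds]; ring
          _ = D := by rw [add_tsub_cancel_of_le hc'lt.le, mul_one]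
      calc V (sol G (sol G ξ u (j * M)) (fun i => u (j * M + i)) M)
          ≤ c' * V (sol G ξ u (j * M)) + d * supNorm (fun i => u (j * M + i)) := h1
        _ ≤ c' * (c' ^ j * V ξ + D) + d * s := by gcongr
        _ = c' ^ (j + 1) * V ξ + (c' * D + d * s) := by ring
        _ ≤ c' ^ (j + 1) * V ξ + D := add_le_add (le_refl _) hDkey.le
  -- growth bound
  have hgrow : ∀ (ζ : E) (v : ℕ → F), BddInput v → ∀ r : ℕ,
      ‖sol G ζ v r‖₊ ≤ w' ^ r * ‖ζ‖₊ + (r : ℝ≥0) * (w' ^ r * ω₂ (supNorm v)) := by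
    intro ζ v hv r
    induction r with
    | zero => simp [sol]
    | succ r ih =>
      have hwr1 : (1:ℝ≥0) ≤ w' ^ (r + 1) := one_le_pow₀ hw'1
      calc ‖sol G ζ v (r + 1)‖₊ = ‖G (sol G ζ v r) (v r)‖₊ := rfl
        _ ≤ w₁ * ‖sol G ζ v r‖₊ + ω₂ ‖v r‖₊ := hbound _ _
        _ ≤ w' * (w' ^ r * ‖ζ‖₊ + (r : ℝ≥0) * (w' ^ r * ω₂ (supNorm v)))
            + ω₂ (supNorm v) := by
            refine add_le_add (mul_le_mul' (le_max_right _ _) ih) ?_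
            exact hω₂m.monotone (norm_le_supNorm_aux hv r)
        _ = w' ^ (r + 1) * ‖ζ‖₊ + ((r : ℝ≥0) * (w' ^ (r + 1) * ω₂ (supNorm v))
            + ω₂ (supNorm v)) := by ring
        _ ≤ w' ^ (r + 1) * ‖ζ‖₊ + ((r : ℝ≥0) + 1) * (w' ^ (r + 1) * ω₂ (supNorm v)) := by
            rw [add_mul, one_mul]
            gcongr
            exact le_mul_of_one_le_left zero_le hwr1
        _ = w' ^ (r + 1) * ‖ζ‖₊ + ((r + 1 : ℕ) : ℝ≥0) * (w' ^ (r + 1) * ω₂ (supNorm v)) := by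
            push_cast
            ring
  -- decompose k = q*M + r
  set q : ℕ := k / M with hqdef
  set r : ℕ := k % M with hrdef
  have hkeq : k = q * M + r := by
    rw [hqdef, hrdef, Nat.mul_comm]
    exact (Nat.div_add_mod k M).symm
  have hrM : r < M := Nat.mod_lt _ (by omega)
  set y : E := sol G ξ u (q * M) with hydef
  have hxk : sol G ξ u k = sol G y (fun i => u (q * M + i)) r := by
    rw [hkeq, sol_add_aux]
  -- step 1: between blocks
  have hstep1 : ‖sol G ξ u k‖₊ ≤ W * ‖y‖₊ + (M : ℝ≥0) * (W * ω₂ s) := by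
    rw [hxk]
    refine (hgrow y _ (shift_bddInput_aux hu _) r).trans ?_
    have hwle : w' ^ r ≤ W := pow_le_pow_right₀ hw'1 hrM.le
    have hωle : ω₂ (supNorm fun i => u (q * M + i)) ≤ ω₂ s :=
      hω₂m.monotone (shift_supNorm_aux hu _)
    gcongr <;> first
      | exact hwle
      | exact hωle
      | exact_mod_cast hrM.le
  -- step 2: bound on ‖y‖ via V
  have hVy : V y ≤ c' ^ q * (b * ‖ξ‖₊ ^ lam) + D := by
    refine (hblock q).trans ?_
    gcongr
    exact (hVbounds ξ).2
  have hylam : ‖y‖₊ ^ lam ≤ (c' ^ q * (b * ‖ξ‖₊ ^ lam) + D) / a := by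
    rw [le_div_iff₀ ha, mul_comm]
    exact (hVbounds y).1.trans hVy
  have hy : ‖y‖₊ ≤ (c' ^ q * (b * ‖ξ‖₊ ^ lam) + D) ^ p / a ^ p := by
    have h1 : ‖y‖₊ = (‖y‖₊ ^ lam) ^ p := by
      rw [← NNReal.rpow_mul, hpdef, mul_one_div_cancel hlam.ne', NNReal.rpow_one]
    rw [h1, ← NNReal.div_rpow]
    exact NNReal.rpow_le_rpow hylam hp.le
  -- expand the rpow of the sum
  have hsplit : (c' ^ q * (b * ‖ξ‖₊ ^ lam) + D) ^ p
      ≤ 2 ^ p * ((c' ^ q) ^ p * (b ^ p * ‖ξ‖₊) + D ^ p) := by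
    refine (add_rpow_le_aux _ _ hp.le).trans ?_
    gcongr
    rw [NNReal.mul_rpow, NNReal.mul_rpow, ← NNReal.rpow_mul,
      hpdef, mul_one_div_cancel hlam.ne', NNReal.rpow_one]
  -- the exponential decay factor
  have hcq : ((c' ^ q : ℝ≥0)) ^ p ≤ B * κ ^ k := by
    have h1 : ((c' ^ q : ℝ≥0)) ^ p = c' ^ ((q : ℝ) * p) := by
      rw [← NNReal.rpow_natCast c' q, ← NNReal.rpow_mul]
    have h2 : (κ : ℝ≥0) ^ k = c' ^ ((p / M) * (k : ℝ)) := by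
      rw [hκdef, ← NNReal.rpow_natCast (c' ^ (p / M : ℝ)) k, ← NNReal.rpow_mul]
    have hexp : (p / M) * (k : ℝ) + (-(p / M)) * ((M:ℝ) - 1) ≤ (q : ℝ) * p := by
      have hkR : (k : ℝ) = (M:ℝ) * q + r := by exact_mod_cast congrArg Nat.cast hkeq |>.trans (by push_cast; ring)
      have hrR : (r : ℝ) ≤ (M:ℝ) - 1 := by
        have : (r : ℝ) + 1 ≤ (M:ℝ) := by exact_mod_cast hrM
        linarith
      have hpM : (0:ℝ) < p / M := by positivity
      have h3 : p / M * (M:ℝ) = p := by field_simp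
      calc (p / M) * (k : ℝ) + (-(p / M)) * ((M:ℝ) - 1)
          = (p / M * (M:ℝ)) * q + (p / M) * ((r:ℝ) - ((M:ℝ) - 1)) := by rw [hkR]; ring
        _ ≤ (p / M * (M:ℝ)) * q := by
          have := mul_nonpos_of_nonneg_of_nonpos hpM.le (sub_nonpos.mpr hrR); linarith
        _ = (q : ℝ) * p := by rw [h3]; ring
    calc ((c' ^ q : ℝ≥0)) ^ p = c' ^ ((q:ℝ) * p) := h1
      _ ≤ c' ^ ((p / M) * (k : ℝ) + (-(p / M)) * ((M:ℝ) - 1)) :=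
        NNReal.rpow_le_rpow_of_exponent_ge hc'pos hc'lt.le hexp
      _ = c' ^ ((p / M) * (k : ℝ)) * c' ^ ((-(p / M)) * ((M:ℝ) - 1)) :=
        NNReal.rpow_add hc'ne _ _
      _ = B * κ ^ k := by rw [h2, hBdef]; ring
  -- D^p expansion
  have hDp : D ^ p = (d / (1 - c')) ^ p * s ^ p := by
    rw [hDdef, ← NNReal.mul_rpow, mul_div_right_comm]
  -- final assembly
  calc ‖sol G ξ u k‖₊ ≤ W * ‖y‖₊ + (M : ℝ≥0) * (W * ω₂ s) := hstep1
    _ ≤ W * (2 ^ p * ((c' ^ q) ^ p * (b ^ p * ‖ξ‖₊) + D ^ p) / a ^ p)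
        + (M : ℝ≥0) * (W * ω₂ s) := by
        gcongr
        refine hy.trans ?_
        gcongr
    _ = (W * 2 ^ p * b ^ p * (a ^ p)⁻¹ * (c' ^ q) ^ p) * ‖ξ‖₊ + (Eco * s ^ p
        + (M : ℝ≥0) * W * ω₂ s) := by rw [hDp, hEdef]; simp only [div_eq_mul_inv]; ring
    _ ≤ (W * 2 ^ p * b ^ p * (a ^ p)⁻¹ * (B * κ ^ k)) * ‖ξ‖₊ + γ s := by
        rw [hγdef]
        gcongr
    _ = (A * κ ^ k) * ‖ξ‖₊ + γ s := by rw [hAdef]; ring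
    _ ≤ C * κ ^ k * ‖ξ‖₊ + γ s := by
        gcongr
        exact le_max_right _ _
end

section
/- Suppose G is globally K-bounded and let M ∈ ℕ with M ≥ 1. Then the system x(k+1) = G(x(k),u(k)) is ISS if and only if its M-iteration x̄(k+1) = G^M(x̄(k), w(k)) is ISS. -/
open scoped NNReal

variable {E F : Type*} [NormedAddCommGroup E] [NormedAddCommGroup F]

/-- The M-th iterate G^M of the dynamics: the state reached from ξ after M steps
of the original system, applying the inputs w 0, …, w (M-1) in order. -/
def iterMap {E F : Type*} [NormedAddCommGroup E] [NormedAddCommGroup F]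
    (G : E → F → E) (M : ℕ) (ξ : E) (w : Fin M → F) : E :=
  sol G ξ (fun k => if h : k < M then w ⟨k, h⟩ else 0) M

section Helpers

open Filter

lemma ClassK.mono {α : ℝ≥0 → ℝ≥0} (h : ClassK α) : Monotone α := h.2.1.monotone

lemma ClassK.comp' {α β : ℝ≥0 → ℝ≥0} (hα : ClassK α) (hβ : ClassK β) :
    ClassK (fun s => α (β s)) :=
  ⟨hα.1.comp hβ.1, hα.2.1.comp hβ.2.1, by show α (β 0) = 0; rw [hβ.2.2, hα.2.2]⟩

lemma ClassK.add' {α β : ℝ≥0 → ℝ≥0} (hα : ClassK α) (hβ : ClassK β) :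
    ClassK (fun s => α s + β s) :=
  ⟨hα.1.add hβ.1, fun x y h => add_lt_add (hα.2.1 h) (hβ.2.1 h),
    by show α 0 + β 0 = 0; rw [hα.2.2, hβ.2.2, add_zero]⟩

lemma classK_id : ClassK (id : ℝ≥0 → ℝ≥0) := ⟨continuous_id, strictMono_id, rfl⟩

lemma classK_two_mul : ClassK (fun s : ℝ≥0 => 2 * s) :=
  ⟨continuous_const.mul continuous_id,
    fun x y h => by exact mul_lt_mul_of_pos_left h two_pos, by simp⟩

lemma ClassK.two_split {α : ℝ≥0 → ℝ≥0} (hα : ClassK α) (c d : ℝ≥0) :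
    α (c + d) ≤ α (2 * c) + α (2 * d) := by
  rcases le_total c d with h | h
  · calc α (c + d) ≤ α (2 * d) := hα.mono (by rw [two_mul]; exact add_le_add_left h d)
      _ ≤ _ := le_add_self
  · calc α (c + d) ≤ α (2 * c) := hα.mono (by rw [two_mul]; exact add_le_add_right h c)
      _ ≤ _ := le_self_add

lemma classKL_antitone {β : ℝ≥0 → ℝ≥0 → ℝ≥0} (hβ : ClassKL β) (a : ℝ≥0) :
    Antitone (β a) := by
  rcases eq_or_lt_of_le (show (0 : ℝ≥0) ≤ a from zero_le) with h | h
  · intro x y _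
    have hx : β a x = 0 := by rw [← h]; exact (hβ.1 x).2.2
    have hy : β a y = 0 := by rw [← h]; exact (hβ.1 y).2.2
    rw [hx, hy]
  · exact (hβ.2 a h).2.1.antitone

lemma sol_congr {E F : Type*} [NormedAddCommGroup E] [NormedAddCommGroup F]
    {G : E → F → E} {ξ : E} {u u' : ℕ → F} (k : ℕ) (h : ∀ j < k, u j = u' j) :
    sol G ξ u k = sol G ξ u' k := by
  induction k with
  | zero => rfl
  | succ k ih =>
    show G (sol G ξ u k) (u k) = G (sol G ξ u' k) (u' k)
    rw [ih (fun j hj => h j (by omega)), h k (by omega)]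

lemma sol_add {E F : Type*} [NormedAddCommGroup E] [NormedAddCommGroup F]
    (G : E → F → E) (ξ : E) (u : ℕ → F) (a b : ℕ) :
    sol G ξ u (a + b) = sol G (sol G ξ u a) (fun j => u (a + j)) b := by
  induction b with
  | zero => rfl
  | succ b ih =>
    show G (sol G ξ u (a + b)) (u (a + b)) = G _ _
    rw [ih]

lemma le_supNorm {F : Type*} [NormedAddCommGroup F] {u : ℕ → F} (h : BddInput u) (k : ℕ) :
    ‖u k‖₊ ≤ supNorm u := le_ciSup h k

lemma supNorm_le {F : Type*} [NormedAddCommGroup F] {u : ℕ → F} {c : ℝ≥0}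
    (h : ∀ k, ‖u k‖₊ ≤ c) : supNorm u ≤ c := ciSup_le h

lemma bddInput_of_le {F : Type*} [NormedAddCommGroup F] {u : ℕ → F} {c : ℝ≥0}
    (h : ∀ k, ‖u k‖₊ ≤ c) : BddInput u :=
  ⟨c, by rintro x ⟨k, rfl⟩; exact h k⟩

/-- Gain functions for the transient bound over finitely many steps. -/
def chiF (ω₁ : ℝ≥0 → ℝ≥0) : ℕ → ℝ≥0 → ℝ≥0
  | 0 => id
  | r + 1 => fun s => chiF ω₁ r s + ω₁ (2 * chiF ω₁ r s)

def psiF (ω₁ ω₂ : ℝ≥0 → ℝ≥0) : ℕ → ℝ≥0 → ℝ≥0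
  | 0 => id
  | r + 1 => fun s => psiF ω₁ ω₂ r s + (ω₁ (2 * psiF ω₁ ω₂ r s) + ω₂ s)

lemma classK_chiF {ω₁ : ℝ≥0 → ℝ≥0} (hω : ClassK ω₁) (r : ℕ) : ClassK (chiF ω₁ r) := by
  induction r with
  | zero => exact classK_id
  | succ r ih => exact ih.add' (hω.comp' (classK_two_mul.comp' ih))

lemma classK_psiF {ω₁ ω₂ : ℝ≥0 → ℝ≥0} (hω₁ : ClassK ω₁) (hω₂ : ClassK ω₂) (r : ℕ) :
    ClassK (psiF ω₁ ω₂ r) := by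
  induction r with
  | zero => exact classK_id
  | succ r ih => exact ih.add' ((hω₁.comp' (classK_two_mul.comp' ih)).add' hω₂)

lemma chiF_mono_step {ω₁ : ℝ≥0 → ℝ≥0} {r r' : ℕ} (h : r ≤ r') (s : ℝ≥0) :
    chiF ω₁ r s ≤ chiF ω₁ r' s := by
  have : Monotone fun r => chiF ω₁ r s :=
    monotone_nat_of_le_succ fun n => le_self_add
  exact this h

lemma psiF_mono_step {ω₁ ω₂ : ℝ≥0 → ℝ≥0} {r r' : ℕ} (h : r ≤ r') (s : ℝ≥0) :
    psiF ω₁ ω₂ r s ≤ psiF ω₁ ω₂ r' s := by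
  have : Monotone fun r => psiF ω₁ ω₂ r s :=
    monotone_nat_of_le_succ fun n => le_self_add
  exact this h

lemma sol_transient_bound {E F : Type*} [NormedAddCommGroup E] [NormedAddCommGroup F]
    {G : E → F → E} {ω₁ ω₂ : ℝ≥0 → ℝ≥0} (hω₁ : ClassK ω₁) (hω₂ : ClassK ω₂)
    (hGb : ∀ ξ μ, ‖G ξ μ‖₊ ≤ ω₁ ‖ξ‖₊ + ω₂ ‖μ‖₊)
    (ξ : E) {u : ℕ → F} (hu : BddInput u) (r : ℕ) :
    ‖sol G ξ u r‖₊ ≤ chiF ω₁ r ‖ξ‖₊ + psiF ω₁ ω₂ r (supNorm u) := by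
  induction r with
  | zero => exact le_self_add
  | succ r ih =>
    calc ‖sol G ξ u (r + 1)‖₊ = ‖G (sol G ξ u r) (u r)‖₊ := rfl
      _ ≤ ω₁ ‖sol G ξ u r‖₊ + ω₂ ‖u r‖₊ := hGb _ _
      _ ≤ ω₁ (chiF ω₁ r ‖ξ‖₊ + psiF ω₁ ω₂ r (supNorm u)) + ω₂ (supNorm u) :=
          add_le_add (hω₁.mono ih) (hω₂.mono (le_supNorm hu r))
      _ ≤ (ω₁ (2 * chiF ω₁ r ‖ξ‖₊) + ω₁ (2 * psiF ω₁ ω₂ r (supNorm u))) + ω₂ (supNorm u) :=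
          add_le_add_left (hω₁.two_split _ _) _
      _ = ω₁ (2 * chiF ω₁ r ‖ξ‖₊) + (ω₁ (2 * psiF ω₁ ω₂ r (supNorm u)) + ω₂ (supNorm u)) :=
          add_assoc _ _ _
      _ ≤ chiF ω₁ (r + 1) ‖ξ‖₊ + psiF ω₁ ω₂ (r + 1) (supNorm u) :=
          add_le_add le_add_self le_add_self

/-- Interleave a sequence of `M`-blocks of inputs into a single input sequence. -/
def glueW {F : Type*} [NormedAddCommGroup F] (M : ℕ) (hM : 0 < M)
    (w : ℕ → Fin M → F) : ℕ → F :=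
  fun j => w (j / M) ⟨j % M, Nat.mod_lt j hM⟩

/-- Chop an input sequence into `M`-blocks. -/
def chopW {F : Type*} [NormedAddCommGroup F] (M : ℕ) (u : ℕ → F) : ℕ → Fin M → F :=
  fun k i => u (M * k + i.1)

lemma glue_chop {F : Type*} [NormedAddCommGroup F] (M : ℕ) (hM : 0 < M) (u : ℕ → F) :
    glueW M hM (chopW M u) = u := by
  funext j
  simp only [glueW, chopW, Nat.div_add_mod]

lemma sol_iterMap_eq {E F : Type*} [NormedAddCommGroup E] [NormedAddCommGroup F]
    (G : E → F → E) (M : ℕ) (hM : 0 < M) (ξ : E) (w : ℕ → Fin M → F) (k : ℕ) :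
    sol (iterMap G M) ξ w k = sol G ξ (glueW M hM w) (M * k) := by
  induction k with
  | zero => rfl
  | succ k ih =>
    have hMk : M * (k + 1) = M * k + M := by ring
    rw [hMk, sol_add G ξ (glueW M hM w) (M * k) M]
    show iterMap G M (sol (iterMap G M) ξ w k) (w k) = _
    rw [ih, iterMap]
    apply sol_congr M
    intro j hj
    simp only [hj, dif_pos, glueW, Nat.mul_add_div hM, Nat.mul_add_mod,
      Nat.div_eq_of_lt hj, Nat.mod_eq_of_lt hj, add_zero]

end Helpers


/-- For globally K-bounded G and M ≥ 1, the system is ISS iff its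
M-iteration is ISS (the input space Fin M → F carries the sup/max norm). -/
theorem ISS_iff_ISS_iteration
    {E F : Type*} [NormedAddCommGroup E] [NormedSpace ℝ E] [FiniteDimensional ℝ E]
    [NormedAddCommGroup F] [NormedSpace ℝ F] [FiniteDimensional ℝ F]
    (G : E → F → E) (hG : GloballyKBounded G) (M : ℕ) (hM : 1 ≤ M) :
    ISS G ↔ ISS (iterMap G M) := by
  obtain ⟨ω₁, ω₂, hω₁, hω₂, hGb⟩ := hG
  have hM0 : 0 < M := hM
  have hMpos : (0 : ℝ≥0) < (M : ℝ≥0) := by exact_mod_cast hM0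
  have hMne : (M : ℝ≥0) ≠ 0 := hMpos.ne'
  constructor
  · rintro ⟨β, γ, hβ, hγ, hb⟩
    refine ⟨fun s t => β s ((M : ℝ≥0) * t), γ, ⟨fun t => hβ.1 _, fun s hs => ?_⟩, hγ, ?_⟩
    · refine ⟨(hβ.2 s hs).1.comp (continuous_const.mul continuous_id),
        (hβ.2 s hs).2.1.comp_strictMono (fun x y h => mul_lt_mul_of_pos_left h hMpos),
        (hβ.2 s hs).2.2.comp ?_⟩
      refine Filter.tendsto_atTop_atTop.mpr fun b => ⟨b, fun t ht => ?_⟩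
      calc b ≤ t := ht
        _ = 1 * t := (one_mul t).symm
        _ ≤ (M : ℝ≥0) * t := mul_le_mul_left (by exact_mod_cast hM) t
    · intro ξ w hw k
      have hcomp : ∀ j, ‖glueW M hM0 w j‖₊ ≤ supNorm w := fun j =>
        (nnnorm_le_pi_nnnorm (w (j / M)) ⟨j % M, Nat.mod_lt j hM0⟩).trans
          (le_supNorm hw (j / M))
      have hbg : BddInput (glueW M hM0 w) := bddInput_of_le hcomp
      have hsn : supNorm (glueW M hM0 w) ≤ supNorm w := supNorm_le hcomp
      calc ‖sol (iterMap G M) ξ w k‖₊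
          = ‖sol G ξ (glueW M hM0 w) (M * k)‖₊ := by rw [sol_iterMap_eq G M hM0]
        _ ≤ β ‖ξ‖₊ ((M * k : ℕ) : ℝ≥0) + γ (supNorm (glueW M hM0 w)) := hb ξ _ hbg (M * k)
        _ ≤ β ‖ξ‖₊ ((M : ℝ≥0) * (k : ℝ≥0)) + γ (supNorm w) := by
            push_cast
            exact add_le_add_right (hγ.mono hsn) _
  · rintro ⟨β, γ, hβ, hγ, hb⟩
    set Χ := chiF ω₁ M with hXdef
    set Ψ := psiF ω₁ ω₂ M with hPdef
    have hΧ : ClassK Χ := classK_chiF hω₁ M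
    have hΨ : ClassK Ψ := classK_psiF hω₁ hω₂ M
    have hβa : ∀ a, Antitone (β a) := classKL_antitone hβ
    refine ⟨fun a t => Χ (2 * β a (t / (M : ℝ≥0) - 1)) + β a t,
      fun b => Χ (2 * γ b) + Ψ b, ⟨fun t => ?_, fun s hs => ?_⟩,
      (hΧ.comp' (classK_two_mul.comp' hγ)).add' hΨ, ?_⟩
    · exact (hΧ.comp' (classK_two_mul.comp' (hβ.1 _))).add' (hβ.1 t)
    · have hc1 : Continuous fun t : ℝ≥0 => t / (M : ℝ≥0) - 1 :=
        (continuous_id.div_const _).sub continuous_const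
      refine ⟨(hΧ.1.comp (continuous_const.mul ((hβ.2 s hs).1.comp hc1))).add
        (hβ.2 s hs).1, ?_, ?_⟩
      · intro x y hxy
        refine add_lt_add_of_le_of_lt ?_ ((hβ.2 s hs).2.1 hxy)
        refine hΧ.mono (mul_le_mul_right (hβa s ?_) 2)
        gcongr
      · have h2 : Filter.Tendsto (fun t : ℝ≥0 => t / (M : ℝ≥0) - 1)
            Filter.atTop Filter.atTop := by
          refine Filter.tendsto_atTop_atTop.mpr fun b => ⟨(b + 1) * M, fun t ht => ?_⟩
          have h3 : b + 1 ≤ t / (M : ℝ≥0) := (le_div_iff₀ hMpos).mpr ht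
          exact le_tsub_of_add_le_right h3
        have h4 : Filter.Tendsto (fun t => β s (t / (M : ℝ≥0) - 1))
            Filter.atTop (nhds 0) := (hβ.2 s hs).2.2.comp h2
        have h5 : Filter.Tendsto (fun x : ℝ≥0 => Χ (2 * x)) (nhds 0) (nhds 0) := by
          have hcont : Continuous fun x : ℝ≥0 => Χ (2 * x) :=
            hΧ.1.comp (continuous_const.mul continuous_id)
          have := hcont.tendsto 0
          simpa [hΧ.2.2] using this
        have h6 := (h5.comp h4).add (hβ.2 s hs).2.2
        simpa [Function.comp] using h6
    · intro ξ u hu k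
      set a := ‖ξ‖₊ with hadef
      set b := supNorm u with hbdef
      set q := k / M with hqdef
      set r := k % M with hrdef
      have hkqr : M * q + r = k := Nat.div_add_mod k M
      have hrM : r < M := Nat.mod_lt k hM0
      have hchopc : ∀ j, ‖chopW M u j‖₊ ≤ b := fun j =>
        pi_nnnorm_le_iff.mpr fun i => le_supNorm hu _
      have hbc : BddInput (chopW M u) := bddInput_of_le hchopc
      have h1 : ‖sol G ξ u (M * q)‖₊ ≤ β a q + γ b := by
        have h0 := hb ξ (chopW M u) hbc q
        rw [sol_iterMap_eq G M hM0, glue_chop] at h0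
        exact h0.trans (add_le_add_right (hγ.mono (supNorm_le hchopc)) _)
      have hshiftc : ∀ j, ‖u (M * q + j)‖₊ ≤ b := fun j => le_supNorm hu _
      have hbs : BddInput fun j => u (M * q + j) := bddInput_of_le hshiftc
      have hsol : sol G ξ u k = sol G (sol G ξ u (M * q)) (fun j => u (M * q + j)) r := by
        rw [← hkqr]; exact sol_add G ξ u (M * q) r
      have h2 : ‖sol G ξ u k‖₊ ≤ Χ ‖sol G ξ u (M * q)‖₊ + Ψ b := by
        rw [hsol]
        refine (sol_transient_bound hω₁ hω₂ hGb _ hbs r).trans (add_le_add ?_ ?_)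
        · exact chiF_mono_step hrM.le _
        · exact ((classK_psiF hω₁ hω₂ r).mono (supNorm_le hshiftc)).trans
            (psiF_mono_step hrM.le b)
      have h3 : Χ ‖sol G ξ u (M * q)‖₊ ≤ Χ (2 * β a q) + Χ (2 * γ b) :=
        (hΧ.mono h1).trans (hΧ.two_split _ _)
      have h5 : k ≤ (q + 1) * M := by
        calc k = M * q + r := hkqr.symm
          _ ≤ M * q + M := Nat.add_le_add_left hrM.le (M * q)
          _ = (q + 1) * M := by ring
      have h4 : β a ((q : ℕ) : ℝ≥0) ≤ β a ((k : ℝ≥0) / (M : ℝ≥0) - 1) := by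
        refine hβa a ?_
        rw [tsub_le_iff_right, div_le_iff₀ hMpos]
        exact_mod_cast h5
      calc ‖sol G ξ u k‖₊ ≤ Χ ‖sol G ξ u (M * q)‖₊ + Ψ b := h2
        _ ≤ (Χ (2 * β a q) + Χ (2 * γ b)) + Ψ b := add_le_add_left h3 _
        _ = Χ (2 * β a q) + (Χ (2 * γ b) + Ψ b) := add_assoc _ _ _
        _ ≤ (Χ (2 * β a ((k : ℝ≥0) / (M : ℝ≥0) - 1)) + β a k) + (Χ (2 * γ b) + Ψ b) :=
            add_le_add_left ((hΧ.mono (mul_le_mul_right h4 2)).trans le_self_add) _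
end

section
/- If the system x(k+1) = G(x(k),u(k)) is exponentially ISS with constants C ≥ 1, κ ∈ [0,1) and gain γ of class K, then the norm V(ξ) := ‖ξ‖ is a dissipative finite-step ISS Lyapunov function: for every M ∈ ℕ with C κ^M < 1 one has V(x(M,ξ,u)) ≤ C κ^M V(ξ) + γ(‖u‖∞) for all ξ ∈ ℝⁿ and all bounded inputs u, where ρ(s) := C κ^M s satisfies id − ρ ∈ K∞. -/
open scoped NNReal

variable {E F : Type*} [NormedAddCommGroup E] [NormedAddCommGroup F]

private lemma classKInf_linear (c : ℝ≥0) (hc : 0 < c) : ClassKInf (fun s => c * s) := by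
  refine ⟨⟨continuous_const.mul continuous_id, ?_, mul_zero c⟩, ?_⟩
  · intro a b hab
    exact mul_lt_mul_of_pos_left hab hc
  · refine Filter.tendsto_atTop_atTop.2 fun b => ⟨b / c, fun a ha => ?_⟩
    calc b = c * (b / c) := by rw [mul_div_cancel₀ _ hc.ne']
    _ ≤ c * a := by exact mul_le_mul_right ha c

private lemma sub_linear (c : ℝ≥0) (hc : c < 1) :
    (fun s : ℝ≥0 => s - c * s) = (fun s => (1 - c) * s) := by
  funext s
  rw [tsub_mul, one_mul]

/-- For an expISS system with constants C ≥ 1, κ ∈ [0,1) and gain γ,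
the norm V(ξ) = ‖ξ‖ is a dissipative finite-step ISS Lyapunov function: for every
M with C·κ^M < 1 one has V(x(M,ξ,u)) ≤ C·κ^M·V(ξ) + γ(‖u‖∞), and
ρ(s) = C·κ^M·s satisfies id − ρ ∈ K∞. -/
theorem norm_is_finite_step_lyapunov_of_expISS
    {E F : Type*} [NormedAddCommGroup E] [NormedSpace ℝ E] [FiniteDimensional ℝ E]
    [NormedAddCommGroup F] [NormedSpace ℝ F] [FiniteDimensional ℝ F]
    (G : E → F → E) (C κ : ℝ≥0) (γ : ℝ≥0 → ℝ≥0)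
    (hC : 1 ≤ C) (hκ : κ < 1) (hγ : ClassK γ)
    (hexp : ∀ ξ u, BddInput u → ∀ k : ℕ,
      ‖sol G ξ u k‖₊ ≤ C * κ ^ k * ‖ξ‖₊ + γ (supNorm u)) :
    DissFinStepLyap G (fun ξ => ‖ξ‖₊) ∧
    ∀ M : ℕ, C * κ ^ M < 1 →
      (∀ ξ u, BddInput u → ‖sol G ξ u M‖₊ ≤ C * κ ^ M * ‖ξ‖₊ + γ (supNorm u)) ∧
      ClassKInf (fun s => s - C * κ ^ M * s) := by

  have key : ∀ M : ℕ, C * κ ^ M < 1 →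
      (∀ ξ u, BddInput u → ‖sol G ξ u M‖₊ ≤ C * κ ^ M * ‖ξ‖₊ + γ (supNorm u)) ∧
      ClassKInf (fun s => s - C * κ ^ M * s) := by
    intro M hM
    constructor
    · intro ξ u hu; exact hexp ξ u hu M
    · rw [sub_linear _ hM]
      exact classKInf_linear _ (tsub_pos_of_lt hM)
  refine ⟨?_, key⟩
  -- find M ≥ 1 with C * κ^M < 1
  obtain ⟨N, hN⟩ : ∃ N : ℕ, C * κ ^ N < 1 := by
    rcases eq_or_lt_of_le (zero_le (a := κ)) with hκ0 | hκ0
    · exact ⟨1, by rw [← hκ0]; simpa using zero_lt_one⟩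
    · have hC0 : 0 < C := lt_of_lt_of_le zero_lt_one hC
      obtain ⟨N, hN⟩ := exists_pow_lt_of_lt_one (by positivity : (0:ℝ≥0) < 1 / C) hκ
      refine ⟨N, ?_⟩
      have := mul_lt_mul_of_pos_left hN hC0
      rwa [mul_one_div, div_self hC0.ne'] at this
  set M := max N 1 with hMdef
  have hpow : κ ^ M ≤ κ ^ N := pow_le_pow_of_le_one (zero_le (a := κ)) hκ.le (le_max_left N 1)
  have hM : C * κ ^ M < 1 := lt_of_le_of_lt (mul_le_mul_right hpow C) hN
  set a : ℝ≥0 := C * κ ^ M with ha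
  set c : ℝ≥0 := (a + 1) / 2 with hc
  have hac : a ≤ c := by
    rw [hc, le_div_iff₀ (by norm_num : (0:ℝ≥0) < 2)]
    calc a * 2 = a + a := by ring
    _ ≤ a + 1 := add_le_add_right hM.le a
  have hc0 : 0 < c := by
    rw [hc]; positivity
  have hc1 : c < 1 := by
    rw [hc, div_lt_one (by norm_num : (0:ℝ≥0) < 2)]
    calc a + 1 < 1 + 1 := add_lt_add_left hM 1
    _ = 2 := by norm_num
  refine ⟨M, ⟨id, id, ⟨⟨continuous_id, strictMono_id, rfl⟩, Filter.tendsto_id⟩,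
      ⟨⟨continuous_id, strictMono_id, rfl⟩, Filter.tendsto_id⟩, fun ξ => ⟨le_refl _, le_refl _⟩⟩,
    le_max_right N 1, γ, fun s => c * s, hγ, ?_, ?_, ?_⟩
  · exact ⟨continuous_const.mul continuous_id, mul_zero c, fun s hs => mul_pos hc0 hs⟩
  · rw [sub_linear _ hc1]
    exact classKInf_linear _ (tsub_pos_of_lt hc1)
  · intro ξ u hu
    calc (‖sol G ξ u M‖₊ : ℝ≥0) ≤ C * κ ^ M * ‖ξ‖₊ + γ (supNorm u) := hexp ξ u hu M
    _ ≤ c * ‖ξ‖₊ + γ (supNorm u) := add_le_add_left (mul_le_mul_left hac _) _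
end

section
/- (Relaxed ISS small-gain theorem, maximization form.) Suppose G is globally K-bounded and the system is the interconnection of N subsystems. Let M ∈ ℕ, M ≥ 1; for i,j ∈ {1,…,N} let γᵢⱼ be of class K∞ or identically zero and γᵢᵤ of class K or identically zero; let δᵢ be positive definite with dᵢ := id + δᵢ of class K∞; and let each Vᵢ : ℝ^{nᵢ} → [0,∞) be proper and positive definite. Assume: (1) for every i, every ξ = (ξ₁,…,ξ_N) ∈ ℝⁿ and every bounded input u, Vᵢ(xᵢ(M,ξ,u)) ≤ max{ max_{j} γᵢⱼ(Vⱼ(ξⱼ)), γᵢᵤ(‖u‖∞) }; (2) there exist σ̃₁,…,σ̃_N of class K∞ (an Ω-path for Γ⊕ ∘ D) such that max_{j} γᵢⱼ(dⱼ(σ̃ⱼ(r))) < σ̃ᵢ(r) for every i and every r > 0; (3) for every i there exists α̂ᵢ of class K∞ with σ̃ᵢ⁻¹(dᵢ⁻¹(σ̃ᵢ(s))) = s − α̂ᵢ(s) for all s ≥ 0. Then V(ξ) := max_{i} σ̃ᵢ⁻¹(dᵢ⁻¹(Vᵢ(ξᵢ))) is a dissipative finite-step ISS Lyapunov function for the overall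 system (with the same M), and in particular the overall system is ISS. -/
open scoped NNReal

variable {E F : Type*} [NormedAddCommGroup E] [NormedAddCommGroup F]

open scoped Topology
open Filter

namespace SGaux

lemma ClassK.mono {f : ℝ≥0 → ℝ≥0} (hf : ClassK f) : Monotone f := hf.2.1.monotone

lemma classK_comp {f g : ℝ≥0 → ℝ≥0} (hf : ClassK f) (hg : ClassK g) :
    ClassK (fun s => f (g s)) :=
  ⟨hf.1.comp hg.1, hf.2.1.comp hg.2.1, by show f (g 0) = 0; rw [hg.2.2, hf.2.2]⟩

lemma classKInf_comp {f g : ℝ≥0 → ℝ≥0} (hf : ClassKInf f) (hg : ClassKInf g) :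
    ClassKInf (fun s => f (g s)) :=
  ⟨classK_comp hf.1 hg.1, hf.2.comp hg.2⟩

lemma classKInf_of_le_self {f : ℝ≥0 → ℝ≥0} (hf : ClassK f) (h : ∀ s, s ≤ f s) :
    ClassKInf f := ⟨hf, tendsto_atTop_mono h tendsto_id⟩

lemma classKInf_two_mul : ClassKInf (fun s : ℝ≥0 => 2 * s) := by
  refine classKInf_of_le_self ⟨continuous_const.mul continuous_id, ?_, mul_zero 2⟩
    fun s => le_mul_of_one_le_left zero_le one_le_two
  intro a b h
  exact mul_lt_mul_of_pos_left h (by norm_num)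

lemma classK_add_of {f g : ℝ≥0 → ℝ≥0} (hf : ClassK f) (hgc : Continuous g)
    (hgm : Monotone g) (hg0 : g 0 = 0) : ClassK fun s => f s + g s :=
  ⟨hf.1.add hgc, fun a b h => add_lt_add_of_lt_of_le (hf.2.1 h) (hgm h.le),
    by simp [hf.2.2, hg0]⟩

lemma classK_add_of' {f g : ℝ≥0 → ℝ≥0} (hg : ClassK g) (hfc : Continuous f)
    (hfm : Monotone f) (hf0 : f 0 = 0) : ClassK fun s => f s + g s :=
  ⟨hfc.add hg.1, fun a b h => add_lt_add_of_le_of_lt (hfm h.le) (hg.2.1 h),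
    by simp [hg.2.2, hf0]⟩

/-! ### Finset sup'/inf' of functions -/

section FinsetFun
variable {ι : Type*} {s : Finset ι} (H : s.Nonempty) (g : ι → ℝ≥0 → ℝ≥0)

lemma continuous_sup' (hg : ∀ i, Continuous (g i)) :
    Continuous fun x => s.sup' H fun i => g i x := by
  induction H using Finset.Nonempty.cons_induction with
  | singleton a => simpa using hg a
  | cons a t ha ht ih =>
    refine Continuous.congr ((hg a).sup ih) fun x => ?_
    exact (Finset.sup'_cons ht (fun i => g i x)).symm

lemma continuous_inf' (hg : ∀ i, Continuous (g i)) :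
    Continuous fun x => s.inf' H fun i => g i x := by
  induction H using Finset.Nonempty.cons_induction with
  | singleton a => simpa using hg a
  | cons a t ha ht ih =>
    refine Continuous.congr ((hg a).inf ih) fun x => ?_
    exact (Finset.inf'_cons ht (fun i => g i x)).symm

lemma strictMono_sup' (hg : ∀ i, StrictMono (g i)) :
    StrictMono fun x => s.sup' H fun i => g i x := by
  intro a b hab
  obtain ⟨j, hj, hje⟩ := Finset.exists_mem_eq_sup' H fun i => g i a
  calc (s.sup' H fun i => g i a) = g j a := hje
    _ < g j b := hg j hab
    _ ≤ _ := Finset.le_sup' (fun i => g i b) hj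

lemma strictMono_inf' (hg : ∀ i, StrictMono (g i)) :
    StrictMono fun x => s.inf' H fun i => g i x := by
  intro a b hab
  obtain ⟨j, hj, hje⟩ := Finset.exists_mem_eq_inf' H fun i => g i b
  calc (s.inf' H fun i => g i a) ≤ g j a := Finset.inf'_le (fun i => g i a) hj
    _ < g j b := hg j hab
    _ = _ := hje.symm

lemma sup'_zero (hg : ∀ i, g i 0 = 0) : (s.sup' H fun i => g i 0) = 0 :=
  le_antisymm (Finset.sup'_le H _ fun i _ => (hg i).le) zero_le

lemma inf'_zero (hg : ∀ i, g i 0 = 0) : (s.inf' H fun i => g i 0) = 0 := by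
  obtain ⟨i, hi⟩ := H
  exact le_antisymm ((Finset.inf'_le _ hi).trans (hg i).le) zero_le

lemma tendsto_sup'_atTop (hg : ∀ i, Tendsto (g i) atTop atTop) :
    Tendsto (fun x => s.sup' H fun i => g i x) atTop atTop := by
  obtain ⟨i, hi⟩ := H
  exact tendsto_atTop_mono (fun x => Finset.le_sup' (fun j => g j x) hi) (hg i)

lemma tendsto_inf'_atTop (hg : ∀ i, Tendsto (g i) atTop atTop) :
    Tendsto (fun x => s.inf' H fun i => g i x) atTop atTop := by
  rw [tendsto_atTop]
  intro b
  have : ∀ i ∈ s, ∀ᶠ x in atTop, b ≤ g i x :=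
    fun i _ => (tendsto_atTop.mp (hg i)) b
  filter_upwards [(eventually_all_finset s).mpr this] with x hx
  exact Finset.le_inf' H _ fun i hi => hx i hi

lemma classKInf_sup' (hg : ∀ i, ClassKInf (g i)) :
    ClassKInf fun x => s.sup' H fun i => g i x :=
  ⟨⟨continuous_sup' H g fun i => (hg i).1.1, strictMono_sup' H g fun i => (hg i).1.2.1,
    sup'_zero H g fun i => (hg i).1.2.2⟩, tendsto_sup'_atTop H g fun i => (hg i).2⟩

lemma classKInf_inf' (hg : ∀ i, ClassKInf (g i)) :
    ClassKInf fun x => s.inf' H fun i => g i x :=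
  ⟨⟨continuous_inf' H g fun i => (hg i).1.1, strictMono_inf' H g fun i => (hg i).1.2.1,
    inf'_zero H g fun i => (hg i).1.2.2⟩, tendsto_inf'_atTop H g fun i => (hg i).2⟩

end FinsetFun

/-! ### Inverses -/

lemma classKInf_inv {f g : ℝ≥0 → ℝ≥0} (hf : ClassKInf f)
    (hl : Function.LeftInverse g f) (hr : Function.RightInverse g f) : ClassKInf g := by
  have hfs : StrictMono f := hf.1.2.1
  have hsurj : Function.Surjective f := hr.surjective
  have hgs : StrictMono g := by
    intro a b hab
    have : f (g a) < f (g b) := by rw [hr a, hr b]; exact hab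
    exact hfs.lt_iff_lt.mp this
  have hg0 : g 0 = 0 := by
    conv_lhs => rw [← hf.1.2.2]
    exact hl 0
  have hgeq : g = ⇑(StrictMono.orderIsoOfSurjective f hfs hsurj).symm := by
    funext x
    have h1 : f ((StrictMono.orderIsoOfSurjective f hfs hsurj).symm x) = x :=
      (StrictMono.orderIsoOfSurjective f hfs hsurj).apply_symm_apply x
    calc g x = g (f ((StrictMono.orderIsoOfSurjective f hfs hsurj).symm x)) := by rw [h1]
      _ = _ := hl _
  have hgc : Continuous g := by rw [hgeq]; exact OrderIso.continuous _
  exact ⟨⟨hgc, hgs, hg0⟩,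
    hgs.monotone.tendsto_atTop_atTop fun b => ⟨f b, (hl b).ge⟩⟩

lemma exists_inv {f : ℝ≥0 → ℝ≥0} (hf : ClassKInf f) :
    ∃ g, Function.LeftInverse g f ∧ Function.RightInverse g f := by
  have hbot : Tendsto f atBot atBot := by
    rw [OrderBot.atBot_eq ℝ≥0]
    have := Filter.tendsto_pure_pure f ⊥
    simpa [bot_eq_zero', hf.1.2.2] using this
  have hsurj : Function.Surjective f := Continuous.surjective hf.1.1 hf.2 hbot
  refine ⟨Function.surjInv hsurj,
    Function.leftInverse_surjInv ⟨hf.1.2.1.injective, hsurj⟩,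
    Function.rightInverse_surjInv hsurj⟩

/-! ### Iterates -/

lemma le_iterate {f : ℝ≥0 → ℝ≥0} (h : ∀ s, s ≤ f s) (n : ℕ) (s : ℝ≥0) :
    s ≤ f^[n] s := by
  induction n with
  | zero => simp
  | succ n ih => rw [Function.iterate_succ_apply']; exact ih.trans (h _)

lemma iterate_le_self {f : ℝ≥0 → ℝ≥0} (h : ∀ s, f s ≤ s) (n : ℕ) (s : ℝ≥0) :
    f^[n] s ≤ s := by
  induction n with
  | zero => simp
  | succ n ih => rw [Function.iterate_succ_apply']; exact (h _).trans ih

lemma iterate_le_iterate {f : ℝ≥0 → ℝ≥0} (hm : Monotone f) (h : ∀ s, s ≤ f s)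
    {a b : ℕ} (hab : a ≤ b) (s : ℝ≥0) : f^[a] s ≤ f^[b] s := by
  obtain ⟨c, rfl⟩ := Nat.exists_eq_add_of_le hab
  rw [Function.iterate_add_apply]
  exact (hm.iterate a) (le_iterate h c s)

lemma iterate_anti {f : ℝ≥0 → ℝ≥0} (hm : Monotone f) (h : ∀ s, f s ≤ s)
    {a b : ℕ} (hab : a ≤ b) (s : ℝ≥0) : f^[b] s ≤ f^[a] s := by
  obtain ⟨c, rfl⟩ := Nat.exists_eq_add_of_le hab
  rw [Function.iterate_add_apply]
  exact (hm.iterate a) (iterate_le_self h c s)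

lemma continuous_iterate {f : ℝ≥0 → ℝ≥0} (hc : Continuous f) (n : ℕ) :
    Continuous f^[n] := by
  induction n with
  | zero => simpa using continuous_id
  | succ n ih => rw [Function.iterate_succ]; exact ih.comp hc

lemma tendsto_iterate_zero {f : ℝ≥0 → ℝ≥0} (hc : Continuous f) (hm : Monotone f)
    (h0 : f 0 = 0) (hlt : ∀ s, 0 < s → f s < s) (r : ℝ≥0) :
    Tendsto (fun n => f^[n] r) atTop (𝓝 0) := by
  have hle : ∀ s, f s ≤ s := by
    intro s
    rcases eq_or_lt_of_le (zero_le : 0 ≤ s) with h | h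
    · rw [← h, h0]
    · exact (hlt s h).le
  have hanti : Antitone fun n => f^[n] r := antitone_nat_of_succ_le fun n => by
    rw [Function.iterate_succ_apply']; exact hle _
  have htend : Tendsto (fun n => f^[n] r) atTop (𝓝 (⨅ n, f^[n] r)) :=
    tendsto_atTop_ciInf hanti (OrderBot.bddBelow _)
  set L := ⨅ n, f^[n] r with hL
  have h1 : Tendsto (fun n => f (f^[n] r)) atTop (𝓝 L) := by
    have h := htend.comp (tendsto_add_atTop_nat 1)
    have he : (fun n => f^[n] r) ∘ (fun a => a + 1) = fun n => f (f^[n] r) := by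
      funext n; simp [Function.comp, Function.iterate_succ_apply']
    rwa [he] at h
  have h2 : Tendsto (fun n => f (f^[n] r)) atTop (𝓝 (f L)) :=
    (hc.tendsto L).comp htend
  have hfix : f L = L := tendsto_nhds_unique h2 h1
  have hL0 : L = 0 := by
    by_contra h
    exact absurd hfix (ne_of_lt (hlt L (pos_iff_ne_zero.mpr h)))
  rwa [hL0] at htend

end SGaux


namespace SGaux

/-- Linear interpolation of a sequence. -/
noncomputable def interp (c : ℕ → ℝ≥0) (x : ℝ≥0) : ℝ≥0 :=
  (1 - (x - (⌊x⌋₊ : ℝ≥0))) * c ⌊x⌋₊ + (x - (⌊x⌋₊ : ℝ≥0)) * c (⌊x⌋₊ + 1)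

lemma theta_lt_one (x : ℝ≥0) : x - (⌊x⌋₊ : ℝ≥0) < 1 := by
  rw [tsub_lt_iff_left (Nat.floor_le (zero_le : 0 ≤ x))]
  exact Nat.lt_floor_add_one x

lemma interp_natCast (c : ℕ → ℝ≥0) (n : ℕ) : interp c (n : ℝ≥0) = c n := by
  simp [interp, Nat.floor_natCast]

lemma interp_le_left {c : ℕ → ℝ≥0} (hc : Antitone c) (x : ℝ≥0) :
    interp c x ≤ c ⌊x⌋₊ := by
  calc interp c x ≤ (1 - (x - (⌊x⌋₊ : ℝ≥0))) * c ⌊x⌋₊ + (x - (⌊x⌋₊ : ℝ≥0)) * c ⌊x⌋₊ :=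
        add_le_add_right (mul_le_mul_right (hc (Nat.le_succ _)) _) _
    _ = ((1 - (x - (⌊x⌋₊ : ℝ≥0))) + (x - (⌊x⌋₊ : ℝ≥0))) * c ⌊x⌋₊ := (add_mul _ _ _).symm
    _ = c ⌊x⌋₊ := by rw [tsub_add_cancel_of_le (theta_lt_one x).le, one_mul]

lemma le_interp {c : ℕ → ℝ≥0} (hc : Antitone c) (x : ℝ≥0) :
    c (⌊x⌋₊ + 1) ≤ interp c x := by
  calc c (⌊x⌋₊ + 1)
      = ((1 - (x - (⌊x⌋₊ : ℝ≥0))) + (x - (⌊x⌋₊ : ℝ≥0))) * c (⌊x⌋₊ + 1) := by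
        rw [tsub_add_cancel_of_le (theta_lt_one x).le, one_mul]
    _ = (1 - (x - (⌊x⌋₊ : ℝ≥0))) * c (⌊x⌋₊ + 1) + (x - (⌊x⌋₊ : ℝ≥0)) * c (⌊x⌋₊ + 1) :=
        add_mul _ _ _
    _ ≤ interp c x := add_le_add_left (mul_le_mul_right (hc (Nat.le_succ _)) _) _

lemma interp_mono_seq {c c' : ℕ → ℝ≥0} (h : ∀ n, c n ≤ c' n) (x : ℝ≥0) :
    interp c x ≤ interp c' x :=
  add_le_add (mul_le_mul_right (h _) _) (mul_le_mul_right (h _) _)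

lemma interp_zero_seq (x : ℝ≥0) : interp (fun _ => 0) x = 0 := by simp [interp]

lemma interp_anti {c : ℕ → ℝ≥0} (hc : Antitone c) : Antitone (interp c) := by
  intro x y hxy
  rcases eq_or_lt_of_le (Nat.floor_mono hxy) with heq | hlt
  · -- same floor
    set n := ⌊x⌋₊ with hn
    have hfy : ⌊y⌋₊ = n := heq.symm
    set a := x - (n : ℝ≥0) with ha
    set b := y - (n : ℝ≥0) with hb
    have hθ : a ≤ b := tsub_le_tsub_right hxy _
    have hy1 : b ≤ 1 := by
      have := theta_lt_one y; rw [hfy] at this; exact this.le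
    have ex : interp c x = (1 - a) * c n + a * c (n+1) := rfl
    have ey : interp c y = (1 - b) * c n + b * c (n+1) := by
      unfold interp; rw [hfy]
    rw [ex, ey]
    have hba : b = (b - a) + a := (tsub_add_cancel_of_le hθ).symm
    have h1b : (1 - a) = (1 - b) + (b - a) := (tsub_add_tsub_cancel hy1 hθ).symm
    calc (1-b) * c n + b * c (n+1)
        = (1-b) * c n + ((b-a)+a) * c (n+1) := by rw [← hba]
      _ = (1-b) * c n + ((b-a) * c (n+1) + a * c (n+1)) := by rw [add_mul]
      _ ≤ (1-b) * c n + ((b-a) * c n + a * c (n+1)) := by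
          gcongr
          exact hc (Nat.le_succ n)
      _ = ((1-b)+(b-a)) * c n + a * c (n+1) := by ring
      _ = (1-a) * c n + a * c (n+1) := by rw [← h1b]
  · -- floor x < floor y
    calc interp c y ≤ c ⌊y⌋₊ := interp_le_left hc y
      _ ≤ c (⌊x⌋₊ + 1) := hc (Nat.succ_le_of_lt hlt)
      _ ≤ interp c x := le_interp hc x

lemma interp_continuous {c : ℕ → ℝ≥0} (hc : Antitone c) : Continuous (interp c) := by
  rw [continuous_iff_continuousAt]
  intro x₀
  set g : ℕ → ℝ≥0 → ℝ≥0 := fun n x =>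
    (1 - (x - (n : ℝ≥0))) * c n + (x - (n : ℝ≥0)) * c (n + 1) with hg
  have hgc : ∀ n, Continuous (g n) := by
    intro n
    exact ((continuous_const.sub (continuous_id.sub continuous_const)).mul continuous_const).add
      ((continuous_id.sub continuous_const).mul continuous_const)
  have hfloor_eq : ∀ (n : ℕ) (x : ℝ≥0), (n : ℝ≥0) ≤ x → x < n + 1 → interp c x = g n x := by
    intro n x h1 h2
    have : ⌊x⌋₊ = n := by
      rw [Nat.floor_eq_iff (zero_le : 0 ≤ x)]
      exact ⟨by exact_mod_cast h1, by push_cast; exact h2⟩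
    simp [interp, hg, this]
  rcases eq_or_lt_of_le (Nat.floor_le (zero_le : 0 ≤ x₀)) with heq | hlt
  · -- x₀ is the natural number m
    set m := ⌊x₀⌋₊ with hm
    have hx₀ : x₀ = (m : ℝ≥0) := heq.symm
    have hval : interp c x₀ = c m := by rw [hx₀, interp_natCast]
    have hright : Tendsto (interp c) (𝓝[≥] x₀) (𝓝 (interp c x₀)) := by
      have hmem : Set.Ico x₀ ((m : ℝ≥0) + 1) ∈ 𝓝[≥] x₀ :=
        Ico_mem_nhdsGE_of_mem ⟨le_refl x₀, by rw [hx₀]; exact lt_add_of_pos_right _ one_pos⟩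
      have hEq : ∀ᶠ x in 𝓝[≥] x₀, interp c x = g m x := by
        filter_upwards [hmem] with x hx
        exact hfloor_eq m x (hx₀ ▸ hx.1) hx.2
      have hgval : g m x₀ = interp c x₀ := by
        rw [hval, hx₀, hg]; simp
      have : Tendsto (g m) (𝓝[≥] x₀) (𝓝 (interp c x₀)) := by
        rw [← hgval]
        exact ((hgc m).tendsto x₀).mono_left nhdsWithin_le_nhds
      exact this.congr' (hEq.mono fun x h => h.symm)
    have hleft : Tendsto (interp c) (𝓝[<] x₀) (𝓝 (interp c x₀)) := by
      rcases Nat.eq_zero_or_pos m with hm0 | hmpos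
      · have : x₀ = 0 := by rw [hx₀, hm0]; simp
        rw [this]
        have : 𝓝[<] (0 : ℝ≥0) = ⊥ := by
          rw [← nhdsWithin_empty (0:ℝ≥0)]
          congr 1
          ext z; simp [not_lt_of_ge (zero_le : 0 ≤ z), Set.mem_Iio]
        rw [this]
        exact tendsto_bot
      · obtain ⟨k, hk'⟩ : ∃ k, m = k + 1 := ⟨m - 1, (Nat.succ_pred_eq_of_pos hmpos).symm⟩
        have hx₀' : x₀ = ((k : ℝ≥0) + 1) := by rw [hx₀, hk']; push_cast; ring
        have hk : ((k : ℝ≥0)) < x₀ := by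
          rw [hx₀']; exact lt_add_of_pos_right _ one_pos
        have hmem : Set.Ioo (k : ℝ≥0) x₀ ∈ 𝓝[<] x₀ :=
          Ioo_mem_nhdsLT_of_mem ⟨hk, le_refl x₀⟩
        have hEq : ∀ᶠ x in 𝓝[<] x₀, interp c x = g k x := by
          filter_upwards [hmem] with x hx
          refine hfloor_eq k x hx.1.le ?_
          calc x < x₀ := hx.2
            _ = (k : ℝ≥0) + 1 := hx₀' 
        have hgval : g k x₀ = interp c x₀ := by
          have hθ : x₀ - (k : ℝ≥0) = 1 := by
            rw [hx₀']; simp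
          rw [hval, hk', hg]
          simp only [hθ, tsub_self, zero_mul, one_mul, zero_add]
        have : Tendsto (g k) (𝓝[<] x₀) (𝓝 (interp c x₀)) := by
          rw [← hgval]
          exact ((hgc k).tendsto x₀).mono_left nhdsWithin_le_nhds
        exact this.congr' (hEq.mono fun x h => h.symm)
    have : ContinuousAt (interp c) x₀ := by
      unfold ContinuousAt
      rw [← nhdsLT_sup_nhdsGE x₀, tendsto_sup]
      exact ⟨hleft, hright⟩
    exact this
  · -- x₀ strictly between floor and floor+1
    set n := ⌊x₀⌋₊ with hn
    have hmem : Set.Ioo (n : ℝ≥0) ((n : ℝ≥0) + 1) ∈ 𝓝 x₀ :=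
      IsOpen.mem_nhds isOpen_Ioo ⟨hlt, Nat.lt_floor_add_one x₀⟩
    have hEq : interp c =ᶠ[𝓝 x₀] g n := by
      filter_upwards [hmem] with x hx
      exact hfloor_eq n x hx.1.le hx.2
    exact ((hgc n).continuousAt).congr hEq.symm


section MainAux
variable {E F : Type*} [NormedAddCommGroup E] [NormedAddCommGroup F]

lemma sol_succ (G : E → F → E) (ξ : E) (u : ℕ → F) (k : ℕ) :
    sol G ξ u (k + 1) = G (sol G ξ u k) (u k) := rfl

lemma sol_add (G : E → F → E) (ξ : E) (u : ℕ → F) (a b : ℕ) :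
    sol G ξ u (a + b) = sol G (sol G ξ u a) (fun k => u (k + a)) b := by
  induction b with
  | zero => rfl
  | succ b ih =>
    have h : a + (b + 1) = (a + b) + 1 := by ring
    rw [h, sol_succ, sol_succ, ih]
    exact congrArg _ (congrArg u (Nat.add_comm a b))

lemma norm_le_supNorm {u : ℕ → F} (hu : BddInput u) (k : ℕ) :
    ‖u k‖₊ ≤ supNorm u := le_ciSup hu k

lemma bddInput_shift {u : ℕ → F} (hu : BddInput u) (a : ℕ) :
    BddInput (fun k => u (k + a)) := by
  refine ⟨supNorm u, ?_⟩
  rintro x ⟨k, rfl⟩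
  exact norm_le_supNorm hu _

lemma supNorm_shift_le {u : ℕ → F} (hu : BddInput u) (a : ℕ) :
    supNorm (fun k => u (k + a)) ≤ supNorm u :=
  ciSup_le fun k => norm_le_supNorm hu _

end MainAux

lemma posK {f : ℝ≥0 → ℝ≥0} (hf : ClassK f) {t : ℝ≥0} (ht : 0 < t) : 0 < f t :=
  hf.2.2 ▸ hf.2.1 ht

lemma mono_add_le_two_mul {f : ℝ≥0 → ℝ≥0} (hm : Monotone f) (a b : ℝ≥0) :
    f (a + b) ≤ f (2 * a) + f (2 * b) := by
  have h : a + b ≤ max (2 * a) (2 * b) := by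
    rcases le_total a b with h | h
    · calc a + b ≤ b + b := by gcongr
        _ = 2 * b := (two_mul b).symm
        _ ≤ _ := le_max_right _ _
    · calc a + b ≤ a + a := by gcongr
        _ = 2 * a := (two_mul a).symm
        _ ≤ _ := le_max_left _ _
  calc f (a + b) ≤ f (max (2 * a) (2 * b)) := hm h
    _ = max (f (2 * a)) (f (2 * b)) := hm.map_max
    _ ≤ _ := max_le (le_add_right le_rfl) (le_add_left le_rfl)


end SGaux
set_option maxHeartbeats 3200000 in
/-- Relaxed ISS small-gain theorem, maximization form. -/
theorem relaxed_small_gain_max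
    {N : ℕ} (hN : 0 < N)
    {E : Fin N → Type*} [∀ i, NormedAddCommGroup (E i)]
    [∀ i, NormedSpace ℝ (E i)] [∀ i, FiniteDimensional ℝ (E i)]
    {F : Type*} [NormedAddCommGroup F] [NormedSpace ℝ F] [FiniteDimensional ℝ F]
    (G : (∀ i, E i) → F → (∀ i, E i)) (hG : GloballyKBounded G)
    (M : ℕ) (hM : 1 ≤ M)
    (γ : Fin N → Fin N → ℝ≥0 → ℝ≥0)
    (hγ : ∀ i j, ClassKInf (γ i j) ∨ γ i j = fun _ => 0)
    (γu : Fin N → ℝ≥0 → ℝ≥0)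
    (hγu : ∀ i, ClassK (γu i) ∨ γu i = fun _ => 0)
    (δ : Fin N → ℝ≥0 → ℝ≥0) (hδ : ∀ i, PosDefFun (δ i))
    (hd : ∀ i, ClassKInf fun s => s + δ i s)
    (V : ∀ i, E i → ℝ≥0) (hV : ∀ i, ProperPosDef (V i))
    -- (1) finite-step decrease in maximization form
    (hdec : ∀ (i : Fin N) (ξ : ∀ i, E i) (u : ℕ → F), BddInput u →
      V i (sol G ξ u M i) ≤
        max (Finset.univ.sup fun j => γ i j (V j (ξ j))) (γu i (supNorm u)))
    -- (2) an Ω-path σ' for Γ⊕ ∘ D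
    (σ' : Fin N → ℝ≥0 → ℝ≥0) (hσ : ∀ i, ClassKInf (σ' i))
    (hpath : ∀ (i : Fin N) (r : ℝ≥0), 0 < r →
      (Finset.univ.sup fun j => γ i j (σ' j r + δ j (σ' j r))) < σ' i r)
    -- inverses of the σ'ᵢ and of dᵢ = id + δᵢ
    (σinv dinv : Fin N → ℝ≥0 → ℝ≥0)
    (hσinv : ∀ i, Function.LeftInverse (σinv i) (σ' i) ∧
      Function.RightInverse (σinv i) (σ' i))
    (hdinv : ∀ i, Function.LeftInverse (dinv i) (fun s => s + δ i s) ∧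
      Function.RightInverse (dinv i) (fun s => s + δ i s))
    -- (3) the functions α̂ᵢ with σ'ᵢ⁻¹ ∘ dᵢ⁻¹ ∘ σ'ᵢ = id − α̂ᵢ
    (hαhat : ∀ i, ∃ αhat : ℝ≥0 → ℝ≥0, ClassKInf αhat ∧
      ∀ s, σinv i (dinv i (σ' i s)) = s - αhat s) :
    DissFinStepLyapAt G
      (fun ξ => Finset.univ.sup fun i => σinv i (dinv i (V i (ξ i)))) M ∧
    ISS G := by
  classical
  obtain ⟨ω₁, ω₂, hω₁, hω₂, hGb⟩ := hG
  have hNE : Nonempty (Fin N) := ⟨⟨0, hN⟩⟩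
  have hne : (Finset.univ : Finset (Fin N)).Nonempty := Finset.univ_nonempty
  have hMpos : 0 < M := hM
  -- monotonicity and zero facts for the gains
  have hγmono : ∀ i j, Monotone (γ i j) := by
    intro i j; rcases hγ i j with h | h
    · exact h.1.2.1.monotone
    · rw [h]; exact monotone_const
  have hγ0 : ∀ i j, γ i j 0 = 0 := by
    intro i j; rcases hγ i j with h | h
    · exact h.1.2.2
    · rw [h]
  have hγumono : ∀ i, Monotone (γu i) := by
    intro i; rcases hγu i with h | h
    · exact h.2.1.monotone
    · rw [h]; exact monotone_const
  have hγucont : ∀ i, Continuous (γu i) := by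
    intro i; rcases hγu i with h | h
    · exact h.1
    · rw [h]; exact continuous_const
  have hγu0 : ∀ i, γu i 0 = 0 := by
    intro i; rcases hγu i with h | h
    · exact h.2.2
    · rw [h]
  -- the maps φ i = σinv i ∘ dinv i
  have hσinvK : ∀ i, ClassKInf (σinv i) :=
    fun i => SGaux.classKInf_inv (hσ i) (hσinv i).1 (hσinv i).2
  have hdinvK : ∀ i, ClassKInf (dinv i) :=
    fun i => SGaux.classKInf_inv (hd i) (hdinv i).1 (hdinv i).2
  set φ : Fin N → ℝ≥0 → ℝ≥0 := fun i s => σinv i (dinv i s) with hφdef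
  have hφK : ∀ i, ClassKInf (φ i) :=
    fun i => SGaux.classKInf_comp (hσinvK i) (hdinvK i)
  set W : (∀ i, E i) → ℝ≥0 :=
    fun ξ => Finset.univ.sup fun i => σinv i (dinv i (V i (ξ i))) with hWdef
  have hWφ : ∀ ξ, W ξ = Finset.univ.sup fun i => φ i (V i (ξ i)) := fun _ => rfl
  -- the functions αhat
  choose αhat hαhatK hαhatEq using hαhat
  have hαhat_le : ∀ i s, αhat i s ≤ s := by
    intro i s
    by_contra h
    push_neg at h
    have h0 : σinv i (dinv i (σ' i s)) = 0 := by
      rw [hαhatEq i s, tsub_eq_zero_of_le h.le]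
    have h1 : dinv i (σ' i s) = 0 := by
      have h2 := congrArg (σ' i) h0
      rw [(hσinv i).2 _] at h2
      rw [h2, (hσ i).1.2.2]
    have h2 : σ' i s = 0 := by
      have h3 := (hdinv i).2 (σ' i s)
      rw [h1] at h3
      simpa [(hδ i).2.1] using h3.symm
    have h4 : s = 0 := by
      have h5 := (hσinv i).1 s
      rw [h2] at h5
      rw [← h5, (hσinvK i).1.2.2]
    rw [h4] at h
    rw [(hαhatK i).1.2.2] at h
    exact absurd h (lt_irrefl 0)
  set ahat : ℝ≥0 → ℝ≥0 := fun s => Finset.univ.inf' hne fun i => αhat i s with hahatdef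
  have hahatK : ClassKInf ahat := SGaux.classKInf_inf' hne _ hαhatK
  have hahat_le_self : ∀ s, ahat s ≤ s :=
    fun s => (Finset.inf'_le _ (Finset.mem_univ ⟨0, hN⟩)).trans (hαhat_le _ s)
  set ρ0 : ℝ≥0 → ℝ≥0 := fun s => Finset.univ.sup' hne fun i => φ i (σ' i s) with hρ0def
  have hρ0K : ClassKInf ρ0 :=
    SGaux.classKInf_sup' hne _ fun i => SGaux.classKInf_comp (hφK i) (hσ i)
  have hρ0sub : ∀ s, ρ0 s = s - ahat s := by
    intro s
    apply le_antisymm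
    · refine Finset.sup'_le _ _ fun i _ => ?_
      calc φ i (σ' i s) = s - αhat i s := hαhatEq i s
        _ ≤ s - ahat s :=
            tsub_le_tsub_left (Finset.inf'_le (fun j => αhat j s) (Finset.mem_univ i)) s
    · obtain ⟨j, hj, hje⟩ := Finset.exists_mem_eq_inf' hne fun i => αhat i s
      calc s - ahat s = s - αhat j s := by rw [show ahat s = αhat j s from hje]
        _ = φ j (σ' j s) := (hαhatEq j s).symm
        _ ≤ ρ0 s := Finset.le_sup' (fun i => φ i (σ' i s)) hj
  have hsum : ∀ s, ρ0 s + ahat s = s :=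
    fun s => by rw [hρ0sub s]; exact tsub_add_cancel_of_le (hahat_le_self s)
  have hρ0_le : ∀ s, ρ0 s ≤ s := fun s => by rw [hρ0sub s]; exact tsub_le_self
  have hρ0_lt : ∀ s, 0 < s → ρ0 s < s := by
    intro s hs
    rw [hρ0sub s]
    exact tsub_lt_self hs (SGaux.posK hahatK.1 hs)
  have hKinfsub : ClassKInf (fun s => s - ρ0 s) := by
    have : (fun s => s - ρ0 s) = ahat := by
      funext s
      rw [hρ0sub s, tsub_tsub_cancel_of_le (hahat_le_self s)]
    rw [this]
    exact hahatK
  have hρ0pd : PosDefFun ρ0 :=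
    ⟨hρ0K.1.1, hρ0K.1.2.2, fun s hs => SGaux.posK hρ0K.1 hs⟩
  -- the input gain for the Lyapunov estimate
  set sigbar : ℝ≥0 → ℝ≥0 :=
    fun s => s + Finset.univ.sup' hne fun i => φ i (γu i s) with hsigbardef
  have hsupγu_mono : Monotone fun s => Finset.univ.sup' hne fun i => φ i (γu i s) := by
    intro a b hab
    refine Finset.sup'_le _ _ fun i hi => ?_
    exact le_trans ((hφK i).1.2.1.monotone (hγumono i hab))
      (Finset.le_sup' (fun j => φ j (γu j b)) hi)
  have hsigbarK : ClassK sigbar := by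
    refine ⟨continuous_id.add (SGaux.continuous_sup' hne _ fun i => (hφK i).1.1.comp (hγucont i)),
      fun a b hab => add_lt_add_of_lt_of_le hab (hsupγu_mono hab.le), ?_⟩
    have h0 : (Finset.univ.sup' hne fun i => φ i (γu i 0)) = 0 := by
      refine le_antisymm (Finset.sup'_le hne _ fun i _ => ?_) zero_le
      rw [hγu0 i, (hφK i).1.2.2]
    show 0 + _ = 0
    rw [h0, add_zero]
  have hsigbar_mono : Monotone sigbar := hsigbarK.2.1.monotone
  -- the finite-step decrease for W
  have hdecW : ∀ ξ u, BddInput u → W (sol G ξ u M) ≤ ρ0 (W ξ) + sigbar (supNorm u) := by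
    intro ξ u hu
    rw [hWφ]
    refine Finset.sup_le fun i _ => ?_
    have h1 : V i (sol G ξ u M i) ≤
        max (Finset.univ.sup fun j => γ i j (V j (ξ j))) (γu i (supNorm u)) := hdec i ξ u hu
    have h2 : φ i (V i (sol G ξ u M i)) ≤
        max (φ i (Finset.univ.sup fun j => γ i j (V j (ξ j)))) (φ i (γu i (supNorm u))) := by
      rw [← (hφK i).1.2.1.monotone.map_max]
      exact (hφK i).1.2.1.monotone h1
    have hB : φ i (γu i (supNorm u)) ≤ sigbar (supNorm u) :=
      (Finset.le_sup' (fun j => φ j (γu j (supNorm u))) (Finset.mem_univ i)).trans le_add_self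
    have hA : φ i (Finset.univ.sup fun j => γ i j (V j (ξ j))) ≤ ρ0 (W ξ) := by
      rcases eq_or_lt_of_le (zero_le : 0 ≤ W ξ) with hW0 | hWpos
      · have hV0 : ∀ j, V j (ξ j) = 0 := by
          intro j
          by_contra hne0
          have hp : 0 < φ j (V j (ξ j)) :=
            SGaux.posK (hφK j).1 (pos_iff_ne_zero.mpr hne0)
          have hle : φ j (V j (ξ j)) ≤ W ξ := by
            rw [hWφ]
            exact Finset.le_sup (f := fun i => φ i (V i (ξ i))) (Finset.mem_univ j)
          rw [← hW0] at hle
          exact absurd (hp.trans_le hle) (lt_irrefl 0)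
        have hzero : (Finset.univ.sup fun j => γ i j (V j (ξ j))) = 0 := by
          refine le_antisymm (Finset.sup_le fun j _ => ?_) zero_le
          rw [hV0 j, hγ0 i j]
        rw [hzero, (hφK i).1.2.2]
        exact zero_le
      · have hVle : ∀ j, V j (ξ j) ≤ σ' j (W ξ) + δ j (σ' j (W ξ)) := by
          intro j
          have h1' : φ j (V j (ξ j)) ≤ W ξ := by
            rw [hWφ]
            exact Finset.le_sup (f := fun i => φ i (V i (ξ i))) (Finset.mem_univ j)
          have h2' : σ' j (φ j (V j (ξ j))) ≤ σ' j (W ξ) := (hσ j).1.2.1.monotone h1'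
          have h3' : σ' j (σinv j (dinv j (V j (ξ j)))) = dinv j (V j (ξ j)) := (hσinv j).2 _
          have h5' : dinv j (V j (ξ j)) ≤ σ' j (W ξ) := by rw [← h3']; exact h2'
          have h4' : dinv j (V j (ξ j)) + δ j (dinv j (V j (ξ j))) = V j (ξ j) :=
            (hdinv j).2 _
          calc V j (ξ j) = dinv j (V j (ξ j)) + δ j (dinv j (V j (ξ j))) := h4'.symm
            _ ≤ σ' j (W ξ) + δ j (σ' j (W ξ)) := (hd j).1.2.1.monotone h5'
        have hslt : (Finset.univ.sup fun j => γ i j (V j (ξ j))) ≤ σ' i (W ξ) := by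
          refine le_trans (Finset.sup_le fun j _ => ?_) (hpath i (W ξ) hWpos).le
          exact le_trans (hγmono i j (hVle j))
            (Finset.le_sup (f := fun j => γ i j (σ' j (W ξ) + δ j (σ' j (W ξ))))
              (Finset.mem_univ j))
        calc φ i (Finset.univ.sup fun j => γ i j (V j (ξ j)))
            ≤ φ i (σ' i (W ξ)) := (hφK i).1.2.1.monotone hslt
          _ = (W ξ) - αhat i (W ξ) := hαhatEq i (W ξ)
          _ ≤ ρ0 (W ξ) := by
              rw [hρ0sub (W ξ)]
              exact tsub_le_tsub_left
                (Finset.inf'_le (fun j => αhat j (W ξ)) (Finset.mem_univ i)) _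
    calc φ i (V i (sol G ξ u M i)) ≤ _ := h2
      _ ≤ max (ρ0 (W ξ)) (sigbar (supNorm u)) := max_le_max hA hB
      _ ≤ ρ0 (W ξ) + sigbar (supNorm u) := max_le (le_add_right le_rfl) (le_add_left le_rfl)
  -- proper positive definiteness of W
  choose α1 α2 hα1K hα2K hbounds using hV
  set psi1 : ℝ≥0 → ℝ≥0 := fun s => Finset.univ.inf' hne fun i => φ i (α1 i s) with hpsi1def
  set psi2 : ℝ≥0 → ℝ≥0 := fun s => Finset.univ.sup' hne fun i => φ i (α2 i s) with hpsi2def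
  have hpsi1K : ClassKInf psi1 :=
    SGaux.classKInf_inf' hne _ fun i => SGaux.classKInf_comp (hφK i) (hα1K i)
  have hpsi2K : ClassKInf psi2 :=
    SGaux.classKInf_sup' hne _ fun i => SGaux.classKInf_comp (hφK i) (hα2K i)
  have hlow : ∀ ζ : ∀ i, E i, psi1 ‖ζ‖₊ ≤ W ζ := by
    intro ζ
    obtain ⟨i₀, hi₀, hi₀eq⟩ := Finset.exists_mem_eq_sup Finset.univ hne fun i => ‖ζ i‖₊
    have hnorm : ‖ζ‖₊ = ‖ζ i₀‖₊ := by rw [Pi.nnnorm_def]; exact hi₀eq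
    calc psi1 ‖ζ‖₊ ≤ φ i₀ (α1 i₀ ‖ζ‖₊) :=
        Finset.inf'_le (fun i => φ i (α1 i ‖ζ‖₊)) (Finset.mem_univ i₀)
      _ = φ i₀ (α1 i₀ ‖ζ i₀‖₊) := by rw [hnorm]
      _ ≤ φ i₀ (V i₀ (ζ i₀)) := (hφK i₀).1.2.1.monotone (hbounds i₀ (ζ i₀)).1
      _ ≤ W ζ := by
          rw [hWφ]
          exact Finset.le_sup (f := fun i => φ i (V i (ζ i))) (Finset.mem_univ i₀)
  have hupp : ∀ ζ : ∀ i, E i, W ζ ≤ psi2 ‖ζ‖₊ := by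
    intro ζ
    rw [hWφ]
    refine Finset.sup_le fun i _ => ?_
    calc φ i (V i (ζ i)) ≤ φ i (α2 i ‖ζ i‖₊) := (hφK i).1.2.1.monotone (hbounds i (ζ i)).2
      _ ≤ φ i (α2 i ‖ζ‖₊) :=
          (hφK i).1.2.1.monotone ((hα2K i).1.2.1.monotone (nnnorm_le_pi_nnnorm ζ i))
      _ ≤ psi2 ‖ζ‖₊ := Finset.le_sup' (fun i => φ i (α2 i ‖ζ‖₊)) (Finset.mem_univ i)
  have hWproper : ProperPosDef W :=
    ⟨psi1, psi2, hpsi1K, hpsi2K, fun ζ => ⟨hlow ζ, hupp ζ⟩⟩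
  have part1 : DissFinStepLyapAt G W M :=
    ⟨hWproper, hM, sigbar, ρ0, hsigbarK, hρ0pd, hKinfsub, hdecW⟩
  refine ⟨part1, ?_⟩
  -- ====== ISS ======
  -- the contraction λ
  set lam : ℝ≥0 → ℝ≥0 := fun s => (s + ρ0 s) / 2 with hlamdef
  have hlamcont : Continuous lam :=
    (continuous_id.add hρ0K.1.1).div₀ continuous_const (fun _ => two_ne_zero)
  have hlamstrict : StrictMono lam := by
    intro a b hab
    have h : a + ρ0 a < b + ρ0 b := add_lt_add hab (hρ0K.1.2.1 hab)
    show (a + ρ0 a) / 2 < (b + ρ0 b) / 2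
    gcongr
  have hlam_mono : Monotone lam := hlamstrict.monotone
  have hlam0 : lam 0 = 0 := by
    show (0 + ρ0 0) / 2 = 0
    rw [hρ0K.1.2.2, add_zero, zero_div]
  have htwo : ∀ s : ℝ≥0, (s + s) / 2 = s := by
    intro s; rw [← two_mul]; exact mul_div_cancel_left₀ s two_ne_zero
  have hlam_le : ∀ s, lam s ≤ s := by
    intro s
    calc (s + ρ0 s) / 2 ≤ (s + s) / 2 := by gcongr; exact hρ0_le s
      _ = s := htwo s
  have hlam_lt : ∀ s, 0 < s → lam s < s := by
    intro s hs
    calc (s + ρ0 s) / 2 < (s + s) / 2 := by gcongr; exact hρ0_lt s hs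
      _ = s := htwo s
  have hlam_id : ∀ s, ρ0 s + ahat s / 2 = lam s := by
    intro s
    show ρ0 s + ahat s / 2 = (s + ρ0 s) / 2
    have h1 : s + ρ0 s = ρ0 s * 2 + ahat s := by
      nth_rewrite 1 [← hsum s]
      ring
    rw [h1, add_div, mul_div_cancel_right₀ _ (two_ne_zero)]
  -- inverses
  obtain ⟨ahatinv, hal, har⟩ := SGaux.exists_inv hahatK
  have hainvK : ClassKInf ahatinv := SGaux.classKInf_inv hahatK hal har
  obtain ⟨psi1inv, hp1l, hp1r⟩ := SGaux.exists_inv hpsi1K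
  have hp1invK : ClassKInf psi1inv := SGaux.classKInf_inv hpsi1K hp1l hp1r
  -- the offset function c
  set cfun : ℝ≥0 → ℝ≥0 := fun t => ahatinv (2 * sigbar t) + sigbar t with hcfundef
  have hcfun_mono : Monotone cfun := by
    intro a b hab
    exact add_le_add (hainvK.1.2.1.monotone (by gcongr; exact hsigbar_mono hab))
      (hsigbar_mono hab)
  have hcfun_cont : Continuous cfun :=
    (hainvK.1.1.comp (continuous_const.mul hsigbarK.1)).add hsigbarK.1
  have hcfun0 : cfun 0 = 0 := by
    show ahatinv (2 * sigbar 0) + sigbar 0 = 0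
    rw [hsigbarK.2.2, mul_zero, hainvK.1.2.2, add_zero]
  -- one-step estimate
  have hstep1 : ∀ w U, ρ0 w + sigbar U ≤ max (lam w) (cfun U) := by
    intro w U
    rcases le_or_gt (sigbar U) (ahat w / 2) with h | h
    · refine le_max_of_le_left ?_
      calc ρ0 w + sigbar U ≤ ρ0 w + ahat w / 2 := by gcongr
        _ = lam w := hlam_id w
    · refine le_max_of_le_right ?_
      have h2 : ahat w < 2 * sigbar U := by
        rwa [div_lt_iff₀ two_pos, mul_comm] at h
      have h3 : w ≤ ahatinv (2 * sigbar U) := by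
        have h4 := hal w
        rw [← h4]
        exact hainvK.1.2.1.monotone h2.le
      calc ρ0 w + sigbar U ≤ w + sigbar U := by gcongr; exact hρ0_le w
        _ ≤ ahatinv (2 * sigbar U) + sigbar U := by gcongr
  -- iterated decrease along multiples of M
  have claimB : ∀ ξ u, BddInput u → ∀ q,
      W (sol G ξ u (M * q)) ≤ max (lam^[q] (W ξ)) (cfun (supNorm u)) := by
    intro ξ u hu q
    induction q with
    | zero =>
      rw [Nat.mul_zero]
      exact le_max_left _ _
    | succ q ih =>
      have hsplit : sol G ξ u (M * (q + 1)) =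
          sol G (sol G ξ u (M * q)) (fun k => u (k + M * q)) M := by
        rw [Nat.mul_succ]; exact SGaux.sol_add G ξ u (M * q) M
      have hu' := SGaux.bddInput_shift hu (M * q)
      have hU' := SGaux.supNorm_shift_le hu (M * q)
      have h1 : W (sol G ξ u (M * (q + 1))) ≤
          ρ0 (W (sol G ξ u (M * q))) + sigbar (supNorm u) := by
        rw [hsplit]
        exact (hdecW _ _ hu').trans (add_le_add_right (hsigbar_mono hU') _)
      refine h1.trans ((hstep1 _ _).trans ?_)
      refine max_le ?_ (le_max_right _ _)
      have h2 : lam (W (sol G ξ u (M * q))) ≤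
          lam (max (lam^[q] (W ξ)) (cfun (supNorm u))) := hlam_mono ih
      rw [hlam_mono.map_max] at h2
      refine h2.trans (max_le ?_ ?_)
      · rw [← Function.iterate_succ_apply' lam q]
        exact le_max_left _ _
      · exact (hlam_le _).trans (le_max_right _ _)
  -- transient growth bound
  set hh : ℝ≥0 → ℝ≥0 := fun s => ω₁ s + ω₂ s + s with hhhdef
  have hhmono : Monotone hh := by
    intro a b hab
    exact add_le_add (add_le_add (hω₁.2.1.monotone hab) (hω₂.2.1.monotone hab)) hab
  have hhstrict : StrictMono hh := by
    intro a b hab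
    exact add_lt_add_of_le_of_lt
      (add_le_add (hω₁.2.1.monotone hab.le) (hω₂.2.1.monotone hab.le)) hab
  have hhcont : Continuous hh := (hω₁.1.add hω₂.1).add continuous_id
  have hh0 : hh 0 = 0 := by
    show ω₁ 0 + ω₂ 0 + 0 = 0
    rw [hω₁.2.2, hω₂.2.2, add_zero, add_zero]
  have hh_ge : ∀ s, s ≤ hh s := fun s => le_add_self
  have claimA : ∀ ξ u, BddInput u → ∀ n r,
      ‖sol G ξ u (n + r)‖₊ + supNorm u ≤ hh^[r] (‖sol G ξ u n‖₊ + supNorm u) := by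
    intro ξ u hu n r
    induction r with
    | zero => simp
    | succ r ih =>
      have he : n + (r + 1) = (n + r) + 1 := by ring
      rw [he, Function.iterate_succ_apply']
      have hstep : ‖sol G ξ u ((n + r) + 1)‖₊ + supNorm u ≤
          hh (‖sol G ξ u (n + r)‖₊ + supNorm u) := by
        calc ‖sol G ξ u ((n + r) + 1)‖₊ + supNorm u
            = ‖G (sol G ξ u (n + r)) (u (n + r))‖₊ + supNorm u := rfl
          _ ≤ (ω₁ ‖sol G ξ u (n + r)‖₊ + ω₂ ‖u (n + r)‖₊) + supNorm u := by
              gcongr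
              exact hGb _ _
          _ ≤ (ω₁ (‖sol G ξ u (n + r)‖₊ + supNorm u) +
                ω₂ (‖sol G ξ u (n + r)‖₊ + supNorm u)) +
                (‖sol G ξ u (n + r)‖₊ + supNorm u) :=
              add_le_add (add_le_add (hω₁.2.1.monotone le_self_add)
                (hω₂.2.1.monotone ((SGaux.norm_le_supNorm hu _).trans le_add_self)))
                le_add_self
          _ = hh (‖sol G ξ u (n + r)‖₊ + supNorm u) := rfl
      exact hstep.trans (hhmono ih)
  set Phi : ℝ≥0 → ℝ≥0 := hh^[M] with hPhidef
  have hPhimono : Monotone Phi := hhmono.iterate M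
  have hPhistrict : StrictMono Phi := hhstrict.iterate M
  have hPhicont : Continuous Phi := SGaux.continuous_iterate hhcont M
  have hPhi0 : Phi 0 = 0 := Function.iterate_fixed hh0 M
  -- the KL function
  set cseq : ℝ≥0 → ℕ → ℝ≥0 :=
    fun s n => Phi (2 * psi1inv (lam^[n / M] (psi2 s))) with hcseqdef
  set gammafin : ℝ≥0 → ℝ≥0 :=
    fun t => Phi (2 * (psi1inv (cfun t) + t)) with hgfdef
  set beta : ℝ≥0 → ℝ≥0 → ℝ≥0 :=
    fun s t => SGaux.interp (cseq s) t + s / (t + 1) with hbetadef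
  have hcseq_cont : ∀ n, Continuous fun s => cseq s n := by
    intro n
    exact hPhicont.comp (continuous_const.mul (hp1invK.1.1.comp
      ((SGaux.continuous_iterate hlamcont _).comp hpsi2K.1.1)))
  have hcseq_mono : ∀ n, Monotone fun s => cseq s n := by
    intro n a b hab
    have h : psi1inv (lam^[n / M] (psi2 a)) ≤ psi1inv (lam^[n / M] (psi2 b)) :=
      hp1invK.1.2.1.monotone ((hlam_mono.iterate _) (hpsi2K.1.2.1.monotone hab))
    exact hPhimono (by gcongr)
  have hcseq_zero : ∀ n, cseq 0 n = 0 := by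
    intro n
    show Phi (2 * psi1inv (lam^[n / M] (psi2 0))) = 0
    rw [hpsi2K.1.2.2, Function.iterate_fixed hlam0, hp1invK.1.2.2, mul_zero, hPhi0]
  have hcseq_anti : ∀ s, Antitone (cseq s) := by
    intro s n m hnm
    have h : psi1inv (lam^[m / M] (psi2 s)) ≤ psi1inv (lam^[n / M] (psi2 s)) :=
      hp1invK.1.2.1.monotone
        (SGaux.iterate_anti hlam_mono hlam_le (Nat.div_le_div_right hnm) _)
    exact hPhimono (by gcongr)
  have hgfK : ClassK gammafin := by
    refine ⟨?_, ?_, ?_⟩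
    · exact hPhicont.comp (continuous_const.mul
        ((hp1invK.1.1.comp hcfun_cont).add continuous_id))
    · intro a b hab
      refine hPhistrict ?_
      have : psi1inv (cfun a) + a < psi1inv (cfun b) + b :=
        add_lt_add_of_le_of_lt (hp1invK.1.2.1.monotone (hcfun_mono hab.le)) hab
      gcongr
    · show Phi (2 * (psi1inv (cfun 0) + 0)) = 0
      rw [hcfun0, hp1invK.1.2.2, add_zero, mul_zero, hPhi0]
  -- β is of class KL
  have hKL : ClassKL beta := by
    constructor
    · intro t
      refine ⟨?_, ?_, ?_⟩
      · have h1 : (fun s => beta s t) = fun s =>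
            ((1 - (t - (⌊t⌋₊ : ℝ≥0))) * cseq s ⌊t⌋₊ +
              (t - (⌊t⌋₊ : ℝ≥0)) * cseq s (⌊t⌋₊ + 1)) + s / (t + 1) := rfl
        rw [h1]
        exact (((continuous_const.mul (hcseq_cont _)).add
          (continuous_const.mul (hcseq_cont _))).add
          (continuous_id.div₀ continuous_const (fun _ => by positivity)))
      · intro a b hab
        have h1 : SGaux.interp (cseq a) t ≤ SGaux.interp (cseq b) t :=
          SGaux.interp_mono_seq (fun n => hcseq_mono n hab.le) t
        have h2 : a / (t + 1) < b / (t + 1) := by gcongr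
        exact add_lt_add_of_le_of_lt h1 h2
      · show SGaux.interp (cseq 0) t + 0 / (t + 1) = 0
        have : cseq 0 = fun _ => 0 := funext hcseq_zero
        rw [this, SGaux.interp_zero_seq, zero_div, add_zero]
    · intro s hs
      refine ⟨?_, ?_, ?_⟩
      · exact (SGaux.interp_continuous (hcseq_anti s)).add
          (continuous_const.div₀ (continuous_id.add continuous_const)
            (fun x => by positivity))
      · intro a b hab
        have h1 : SGaux.interp (cseq s) b ≤ SGaux.interp (cseq s) a :=
          SGaux.interp_anti (hcseq_anti s) hab.le
        have h2 : s / (b + 1) < s / (a + 1) :=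
          div_lt_div_of_pos_left hs (by positivity) (by gcongr)
        exact add_lt_add_of_le_of_lt h1 h2
      · -- tendsto 0
        have hbound : ∀ t, beta s t ≤ cseq s ⌊t⌋₊ + s / (t + 1) := by
          intro t
          exact add_le_add_left (SGaux.interp_le_left (hcseq_anti s) t) _
        have hdiv : Tendsto (fun n : ℕ => n / M) atTop atTop := by
          refine tendsto_atTop_atTop.mpr fun b => ⟨b * M, fun n hn => ?_⟩
          exact (Nat.le_div_iff_mul_le hMpos).mpr hn
        have hiter : Tendsto (fun q : ℕ => lam^[q] (psi2 s)) atTop (𝓝 0) :=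
          SGaux.tendsto_iterate_zero hlamcont hlam_mono hlam0 hlam_lt (psi2 s)
        have hFcont : Tendsto (fun x : ℝ≥0 => Phi (2 * psi1inv x)) (𝓝 0) (𝓝 0) := by
          have hc : Continuous fun x : ℝ≥0 => Phi (2 * psi1inv x) :=
            hPhicont.comp (continuous_const.mul hp1invK.1.1)
          have h0 : Phi (2 * psi1inv 0) = 0 := by
            rw [hp1invK.1.2.2, mul_zero, hPhi0]
          have := hc.tendsto 0
          rwa [h0] at this
        have hc1 : Tendsto (fun n : ℕ => cseq s n) atTop (𝓝 0) :=
          hFcont.comp (hiter.comp hdiv)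
        have hc2 : Tendsto (fun t : ℝ≥0 => cseq s ⌊t⌋₊) atTop (𝓝 0) :=
          hc1.comp tendsto_nat_floor_atTop
        have hc3 : Tendsto (fun t : ℝ≥0 => s / (t + 1)) atTop (𝓝 0) := by
          rw [← NNReal.tendsto_coe]
          simp only [NNReal.coe_div, NNReal.coe_add, NNReal.coe_one, NNReal.coe_zero]
          exact Tendsto.const_div_atTop (tendsto_atTop_add_const_right _ 1
            (NNReal.tendsto_coe_atTop.mpr tendsto_id)) _
        have hsumt : Tendsto (fun t : ℝ≥0 => cseq s ⌊t⌋₊ + s / (t + 1)) atTop (𝓝 0) := by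
          have := hc2.add hc3
          rwa [add_zero] at this
        exact tendsto_of_tendsto_of_tendsto_of_le_of_le tendsto_const_nhds hsumt
          (fun t => zero_le) hbound
  -- final trajectory bound
  refine ⟨beta, gammafin, hKL, hgfK, ?_⟩
  intro ξ u hu k
  set U := supNorm u with hU
  set q := k / M with hq
  have hkeq : M * q + k % M = k := Nat.div_add_mod k M
  have h1 : ‖sol G ξ u k‖₊ + U ≤ hh^[k % M] (‖sol G ξ u (M * q)‖₊ + U) := by
    conv_lhs => rw [← hkeq]
    exact claimA ξ u hu (M * q) (k % M)
  have h2 : hh^[k % M] (‖sol G ξ u (M * q)‖₊ + U) ≤ Phi (‖sol G ξ u (M * q)‖₊ + U) :=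
    SGaux.iterate_le_iterate hhmono hh_ge (Nat.mod_lt k hMpos).le _
  have h3 : ‖sol G ξ u (M * q)‖₊ ≤ psi1inv (W (sol G ξ u (M * q))) := by
    have hl := hlow (sol G ξ u (M * q))
    have hmono := hp1invK.1.2.1.monotone hl
    rwa [hp1l _] at hmono
  have h4 := claimB ξ u hu q
  have h5 : psi1inv (W (sol G ξ u (M * q))) ≤
      psi1inv (lam^[q] (psi2 ‖ξ‖₊)) + psi1inv (cfun U) := by
    have hm := hp1invK.1.2.1.monotone h4
    rw [hp1invK.1.2.1.monotone.map_max] at hm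
    refine hm.trans (max_le ?_ ?_)
    · have hup : lam^[q] (W ξ) ≤ lam^[q] (psi2 ‖ξ‖₊) := (hlam_mono.iterate q) (hupp ξ)
      exact le_add_right (hp1invK.1.2.1.monotone hup)
    · exact le_add_left le_rfl
  have h6 : ‖sol G ξ u (M * q)‖₊ + U ≤
      psi1inv (lam^[q] (psi2 ‖ξ‖₊)) + (psi1inv (cfun U) + U) := by
    calc ‖sol G ξ u (M * q)‖₊ + U ≤
        (psi1inv (lam^[q] (psi2 ‖ξ‖₊)) + psi1inv (cfun U)) + U := by
          gcongr
          exact h3.trans h5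
      _ = _ := add_assoc _ _ _
  have h7 : Phi (‖sol G ξ u (M * q)‖₊ + U) ≤
      Phi (2 * psi1inv (lam^[q] (psi2 ‖ξ‖₊))) + Phi (2 * (psi1inv (cfun U) + U)) :=
    (hPhimono h6).trans (SGaux.mono_add_le_two_mul hPhimono _ _)
  have h8 : Phi (2 * psi1inv (lam^[q] (psi2 ‖ξ‖₊))) ≤ beta ‖ξ‖₊ k := by
    calc Phi (2 * psi1inv (lam^[q] (psi2 ‖ξ‖₊))) = cseq ‖ξ‖₊ k := by rw [hcseqdef]
      _ = SGaux.interp (cseq ‖ξ‖₊) (k : ℝ≥0) := (SGaux.interp_natCast _ k).symm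
      _ ≤ beta ‖ξ‖₊ k := le_self_add
  calc ‖sol G ξ u k‖₊ ≤ ‖sol G ξ u k‖₊ + U := le_self_add
    _ ≤ hh^[k % M] (‖sol G ξ u (M * q)‖₊ + U) := h1
    _ ≤ Phi (‖sol G ξ u (M * q)‖₊ + U) := h2
    _ ≤ Phi (2 * psi1inv (lam^[q] (psi2 ‖ξ‖₊))) + Phi (2 * (psi1inv (cfun U) + U)) := h7
    _ ≤ beta ‖ξ‖₊ k + gammafin U := add_le_add h8 le_rfl
end
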